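/- arXiv:1901.07443 — 11 statements merged into one kernel-verified Lean document; each statement's English description precedes it below -/
import Mathlib

section
/- If an alternating permutation σ of length n has a swap at position i (i.e., σ⁻¹(i) < σ⁻¹(i+1) - 1), then the permutation obtained from σ by exchanging the values i and i+1 is again an alternating permutation. -/
open Finset

/-- `σ` (0-indexed) is an alternating permutation: `σ 0 < σ 1 > σ 2 < …`. -/
def IsAlternating {n : ℕ} (σ : Equiv.Perm (Fin n)) : Prop :=
  ∀ i j : Fin n, (j : ℕ) = (i : ℕ) + 1 →
    ((Even (i : ℕ) → σ i < σ j) ∧ (Odd (i : ℕ) → σ j < σ i))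

/-- `k` (a 1-indexed value, `1 ≤ k ≤ n-1`) is a swap of `σ`:
writing `i, j` for the 0-indexed values `k-1, k`, we have `σ⁻¹(k) < σ⁻¹(k+1) - 1`. -/
def IsSwap {n : ℕ} (σ : Equiv.Perm (Fin n)) (k : ℕ) : Prop :=
  ∃ i j : Fin n, (i : ℕ) + 1 = k ∧ (j : ℕ) = k ∧ ((σ.symm i : ℕ) + 1 < (σ.symm j : ℕ))

instance {n : ℕ} (σ : Equiv.Perm (Fin n)) : DecidablePred (IsSwap σ) := fun k => by
  unfold IsSwap; infer_instance

/-- The set of swaps of `σ` (as 1-indexed values). -/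
def swapSet {n : ℕ} (σ : Equiv.Perm (Fin n)) : Finset ℕ :=
  (Finset.range n).filter (fun k => IsSwap σ k)

/-- The number of swaps of `σ`. -/
def swapCount {n : ℕ} (σ : Equiv.Perm (Fin n)) : ℕ := (swapSet σ).card

/-- Number of inversions of `σ`. -/
def invNum {n : ℕ} (σ : Equiv.Perm (Fin n)) : ℕ :=
  (Finset.univ.filter (fun p : Fin n × Fin n => p.1 < p.2 ∧ σ p.2 < σ p.1)).card

/-- The vertex `v_k^σ` (for `0 ≤ k ≤ n`): all-ones minus the sum of `e_{σ⁻¹(m)}`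
for the first `k` values `m`. -/
def vtx {n : ℕ} (σ : Equiv.Perm (Fin n)) (k : ℕ) : Fin n → ℕ :=
  fun j => if (σ j : ℕ) < k then 0 else 1

/-- The vertex set `vert(σ) = {v_0^σ, …, v_n^σ}` of the simplex `Δ^σ`. -/
def vert {n : ℕ} (σ : Equiv.Perm (Fin n)) : Finset (Fin n → ℕ) :=
  (Finset.range (n + 1)).image (vtx σ)

/-- The exclusion set of `σ`: vertices `v_k^σ` with `k` a swap of `σ`. -/
def excl {n : ℕ} (σ : Equiv.Perm (Fin n)) : Finset (Fin n → ℕ) :=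
  (((Finset.range (n + 1)).filter (fun k => IsSwap σ k))).image (vtx σ)

/-- `σ` swaps to `τ`: `τ` is obtained from `σ` by exchanging two consecutive values
`i < j = i+1` (0-indexed) at a swap position. -/
def SwapsTo {n : ℕ} (σ τ : Equiv.Perm (Fin n)) : Prop :=
  ∃ i j : Fin n, (j : ℕ) = (i : ℕ) + 1 ∧ ((σ.symm i : ℕ) + 1 < (σ.symm j : ℕ)) ∧
    τ = Equiv.swap i j * σ

/-- The order relation of the zig-zag poset `Z_n` (0-indexed): even indices are minimal,
odd indices are maximal, and an even index lies below its odd neighbours. -/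
def zigzagLE {n : ℕ} (i j : Fin n) : Prop :=
  i = j ∨ (Odd (j : ℕ) ∧ ((i : ℕ) + 1 = (j : ℕ) ∨ (i : ℕ) = (j : ℕ) + 1))

/-- A (down-closed) order ideal of the zig-zag poset `Z_n`. -/
def IsOrderIdeal {n : ℕ} (I : Finset (Fin n)) : Prop :=
  ∀ i j : Fin n, zigzagLE i j → j ∈ I → i ∈ I

/-- The Euler zig-zag number: the number of alternating permutations of length `n`. -/
noncomputable def eulerZigzag (n : ℕ) : ℕ := Nat.card {σ : Equiv.Perm (Fin n) // IsAlternating σ}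

/-- exchanging the values `i` and `i+1` at a swap position of an alternating
permutation yields another alternating permutation. -/
theorem swap_isAlternating (n : ℕ) (σ : Equiv.Perm (Fin n)) (h : IsAlternating σ)
    (i j : Fin n) (hij : (j : ℕ) = (i : ℕ) + 1)
    (hsw : (σ.symm i : ℕ) + 1 < (σ.symm j : ℕ)) :
    IsAlternating (Equiv.swap i j * σ) := by
  have key : ∀ x y : Fin n, x < y → ¬(x = i ∧ y = j) →
      Equiv.swap i j x < Equiv.swap i j y := by
    intro x y hxy hne
    rw [Fin.lt_def] at hxy ⊢
    by_cases hxi : x = i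
    · have hyj : y ≠ j := fun hy => hne ⟨hxi, hy⟩
      have hyi : y ≠ i := by rintro rfl; rw [hxi] at hxy; omega
      rw [hxi, Equiv.swap_apply_left, Equiv.swap_apply_of_ne_of_ne hyi hyj]
      rw [hxi] at hxy
      have hyj' : (y:ℕ) ≠ (j:ℕ) := fun hh => hyj (Fin.ext hh)
      omega
    · by_cases hxj : x = j
      · have hyi : y ≠ i := by
          rintro rfl
          rw [hxj] at hxy; omega
        have hyj : y ≠ j := by rintro rfl; omega
        rw [hxj, Equiv.swap_apply_right, Equiv.swap_apply_of_ne_of_ne hyi hyj]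
        rw [hxj] at hxy
        omega
      · rw [Equiv.swap_apply_of_ne_of_ne hxi hxj]
        by_cases hyi : y = i
        · rw [hyi, Equiv.swap_apply_left]
          rw [hyi] at hxy
          omega
        · by_cases hyj : y = j
          · rw [hyj, Equiv.swap_apply_right]
            rw [hyj] at hxy
            have hxi' : (x:ℕ) ≠ (i:ℕ) := fun hh => hxi (Fin.ext hh)
            omega
          · rw [Equiv.swap_apply_of_ne_of_ne hyi hyj]
            exact hxy
  intro a b hab
  have hσa : σ a ≠ i ∨ σ b ≠ j := by
    by_contra hc
    push_neg at hc
    have h1 : σ.symm i = a := by rw [← hc.1]; simp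
    have h2 : σ.symm j = b := by rw [← hc.2]; simp
    rw [h1, h2] at hsw
    omega
  have hσa' : σ a ≠ j ∨ σ b ≠ i := by
    by_contra hc
    push_neg at hc
    have h1 : σ.symm j = a := by rw [← hc.1]; simp
    have h2 : σ.symm i = b := by rw [← hc.2]; simp
    rw [h1, h2] at hsw
    omega
  obtain ⟨he, ho⟩ := h a b hab
  constructor
  · intro hev
    exact key _ _ (he hev) (by rintro ⟨h1, h2⟩; rcases hσa with hh | hh <;> simp_all)
  · intro hod
    exact key _ _ (ho hod) (by rintro ⟨h1, h2⟩; rcases hσa' with hh | hh <;> simp_all)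
end

section
/- Let σ be an alternating permutation of length n and let a, b ∈ [n] with a < b such that (σ⁻¹(a), σ⁻¹(b)) is a relevant non-inversion, i.e., σ⁻¹(a) < σ⁻¹(b) - 1. Then there exists k with a ≤ k < b such that k is a swap of σ. -/
open Finset

/-- between the endpoints of any relevant non-inversion of an alternating
permutation there is a swap. -/
theorem swap_between_relevant_noninversion (n : ℕ) (σ : Equiv.Perm (Fin n))
    (h : IsAlternating σ) (a b : Fin n) (hab : a < b)
    (hrel : (σ.symm a : ℕ) + 1 < (σ.symm b : ℕ)) :
    ∃ k l : Fin n, (l : ℕ) = (k : ℕ) + 1 ∧ a ≤ k ∧ k < b ∧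
      (σ.symm k : ℕ) + 1 < (σ.symm l : ℕ) := by
  by_contra hcon
  push_neg at hcon
  have key : ∀ d : ℕ, (a:ℕ) + d ≤ (b:ℕ) →
      ∀ (hm : (a:ℕ) + d < n),
      ((σ.symm ⟨(a:ℕ)+d, hm⟩ : ℕ) ≤ (σ.symm a : ℕ) + 1) ∧
      ((σ.symm ⟨(a:ℕ)+d, hm⟩ : ℕ) = (σ.symm a : ℕ) + 1 →
        Odd ((σ.symm ⟨(a:ℕ)+d, hm⟩ : ℕ))) := by
    intro d
    induction d with
    | zero =>
      intro _ hm
      have he : (⟨(a:ℕ) + 0, hm⟩ : Fin n) = a := Fin.ext (by simp)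
      rw [he]
      exact ⟨Nat.le_succ _, fun hc => absurd hc (by omega)⟩
    | succ d ih =>
      intro hdb hm
      have hd : (a:ℕ) + d ≤ (b:ℕ) := by omega
      have hm' : (a:ℕ) + d < n := by omega
      obtain ⟨ih1, ih2⟩ := ih hd hm'
      set k : Fin n := ⟨(a:ℕ)+d, hm'⟩ with hk
      set l : Fin n := ⟨(a:ℕ)+(d+1), hm⟩ with hl
      have hkl : (l : ℕ) = (k : ℕ) + 1 := by simp [hk, hl]; omega
      have hkb : k < b := Fin.lt_def.mpr (by simp [hk]; omega)
      have hak : a ≤ k := Fin.le_def.mpr (by simp [hk])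
      have hle := hcon k l hkl hak hkb
      rcases Nat.lt_or_ge (σ.symm l : ℕ) (σ.symm k : ℕ) with hlt | hge
      · exact ⟨by omega, fun hc => absurd hc (by omega)⟩
      · have hne : σ.symm l ≠ σ.symm k := by
          intro hc
          have : l = k := σ.symm.injective hc
          rw [hl, hk] at this
          have := Fin.mk.inj_iff.mp this
          omega
        have heq : (σ.symm l : ℕ) = (σ.symm k : ℕ) + 1 := by
          rcases Nat.lt_or_ge (σ.symm k : ℕ) (σ.symm l : ℕ) with h1 | h1
          · omega
          · exfalso; exact hne (Fin.ext (by omega))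
        have halt := h (σ.symm k) (σ.symm l) heq
        have hklv : σ (σ.symm k) < σ (σ.symm l) := by
          simp only [Equiv.apply_symm_apply]
          exact Fin.lt_def.mpr (by omega)
        have heven : Even ((σ.symm k : ℕ)) := by
          rcases Nat.even_or_odd ((σ.symm k : ℕ)) with he | ho
          · exact he
          · exact absurd (halt.2 ho) (not_lt_of_gt hklv)
        constructor
        · rcases Nat.lt_or_ge ((σ.symm k : ℕ)) ((σ.symm a : ℕ) + 1) with h2 | h2
          · omega
          · have h3 : (σ.symm k : ℕ) = (σ.symm a : ℕ) + 1 := by omega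
            have := ih2 h3
            exact absurd (this) (by simpa [h3] using (Nat.not_odd_iff_even.mpr (h3 ▸ heven)))
        · intro h3
          rw [heq] at h3 ⊢
          exact Even.add_one heven
  have hbn : (b:ℕ) < n := b.isLt
  have hd := key ((b:ℕ) - (a:ℕ)) (by omega) (by omega)
  have he : (⟨(a:ℕ) + ((b:ℕ) - (a:ℕ)), by omega⟩ : Fin n) = b := Fin.ext (by
    simp; omega)
  rw [he] at hd
  omega
end

section
/- No alternating permutation of length n ≥ 2 has all of 1, 2, …, n-1 as swaps; i.e., the number s_n(n-1) of alternating permutations with exactly n-1 swaps is 0. -/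
open Finset

/-- no alternating permutation of length `n ≥ 2` has `n-1` swaps,
i.e. `s_n(n-1) = 0`. -/
theorem no_alternating_with_all_swaps (n : ℕ) (hn : 2 ≤ n) :
    Nat.card {σ : Equiv.Perm (Fin n) // IsAlternating σ ∧ swapCount σ = n - 1} = 0 := by
  rw [Nat.card_eq_zero]
  left
  constructor
  rintro ⟨σ, _, hc⟩
  have hsub : swapSet σ ⊆ Finset.Ico 1 n := by
    intro k hk
    simp only [swapSet, Finset.mem_filter, Finset.mem_range] at hk
    obtain ⟨hkn, i, j, hi, hj, _⟩ := hk
    exact Finset.mem_Ico.mpr ⟨by omega, hkn⟩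
  have heq : swapSet σ = Finset.Ico 1 n := by
    apply Finset.eq_of_subset_of_card_le hsub
    rw [Nat.card_Ico]
    rw [swapCount] at hc
    omega
  have hswap : ∀ k, 1 ≤ k → k < n → IsSwap σ k := by
    intro k h1 h2
    have hk : k ∈ swapSet σ := heq ▸ Finset.mem_Ico.mpr ⟨h1, h2⟩
    simp only [swapSet, Finset.mem_filter] at hk
    exact hk.2
  have key : ∀ k (h : k < n), 2 * k ≤ (σ.symm ⟨k, h⟩ : ℕ) := by
    intro k
    induction k with
    | zero => intro h; omega
    | succ m ih =>
      intro h
      have hm : m < n := by omega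
      obtain ⟨i, j, hi, hj, hlt⟩ := hswap (m + 1) (by omega) h
      have hieq : i = ⟨m, hm⟩ := Fin.ext (by simp only [Fin.val_mk]; omega)
      have hjeq : j = ⟨m + 1, h⟩ := Fin.ext hj
      subst hieq hjeq
      have := ih hm
      omega
  have hlast := key (n - 1) (by omega)
  have hb : ((σ.symm ⟨n - 1, by omega⟩ : Fin n) : ℕ) < n := (σ.symm _).isLt
  omega
end

section
/- For n ≥ 2, there is exactly one alternating permutation of length n with exactly n-2 swaps, namely the permutation with values 1, 2, …, ⌈n/2⌉ placed in order in the odd positions and ⌈n/2⌉+1, …, n placed in order in the even positions. -/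
open Finset

-- position function, ℕ-valued
def posFun {n : ℕ} (σ : Equiv.Perm (Fin n)) (m : ℕ) : ℕ :=
  if h : m < n then (σ.symm ⟨m, h⟩ : ℕ) else n

lemma posFun_lt {n : ℕ} (σ : Equiv.Perm (Fin n)) {m : ℕ} (h : m < n) : posFun σ m < n := by
  simp only [posFun, dif_pos h]
  exact (σ.symm ⟨m, h⟩).isLt

lemma posFun_inj {n : ℕ} (σ : Equiv.Perm (Fin n)) {a b : ℕ} (ha : a < n) (hb : b < n)
    (h : posFun σ a = posFun σ b) : a = b := by
  simp only [posFun, dif_pos ha, dif_pos hb] at h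
  have := σ.symm.injective (Fin.ext h)
  simpa using congrArg Fin.val this

lemma posFun_apply {n : ℕ} (σ : Equiv.Perm (Fin n)) (i : Fin n) :
    posFun σ ((σ i : Fin n) : ℕ) = (i : ℕ) := by
  simp [posFun, (σ i).isLt]

lemma isSwap_iff {n : ℕ} (σ : Equiv.Perm (Fin n)) {k : ℕ} (h1 : 1 ≤ k) (h2 : k < n) :
    IsSwap σ k ↔ posFun σ (k - 1) + 1 < posFun σ k := by
  constructor
  · rintro ⟨i, j, hi, hj, hlt⟩
    have hi' : i = ⟨k - 1, by omega⟩ := Fin.ext (by simp; omega)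
    have hj' : j = ⟨k, h2⟩ := Fin.ext (by simp [hj])
    simp only [hi', hj'] at hlt
    simpa [posFun, show k - 1 < n by omega, h2] using hlt
  · intro h
    refine ⟨⟨k - 1, by omega⟩, ⟨k, h2⟩, by simp; omega, rfl, ?_⟩
    simpa [posFun, show k - 1 < n by omega, h2] using h

lemma isSwap_pos {n : ℕ} {σ : Equiv.Perm (Fin n)} {k : ℕ} (h : IsSwap σ k) : 1 ≤ k := by
  obtain ⟨i, _, hi, _, _⟩ := h; omega

lemma alt_formula {n : ℕ} (hn : 2 ≤ n) (σ : Equiv.Perm (Fin n))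
    (halt : IsAlternating σ) (hsc : swapCount σ = n - 2) :
    ∀ p : Fin n, (σ p : ℕ) =
      if (p : ℕ) % 2 = 0 then (p : ℕ) / 2 else (n + 1) / 2 + (p : ℕ) / 2 := by
  -- extract the unique non-swap d
  have hsub : swapSet σ ⊆ Finset.Ioo 0 n := by
    intro k hk
    simp only [swapSet, mem_filter, mem_range] at hk
    simp only [mem_Ioo]
    exact ⟨isSwap_pos hk.2, hk.1⟩
  have hcard : (Finset.Ioo 0 n \ swapSet σ).card = 1 := by
    rw [card_sdiff_of_subset hsub]
    rw [Nat.card_Ioo]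
    unfold swapCount at hsc
    omega
  obtain ⟨d, hd⟩ := Finset.card_eq_one.mp hcard
  have hdmem : d ∈ Finset.Ioo 0 n \ swapSet σ := by rw [hd]; exact mem_singleton_self d
  have hd1 : 1 ≤ d := by have := (mem_sdiff.mp hdmem).1; simp [mem_Ioo] at this; omega
  have hd2 : d < n := by have := (mem_sdiff.mp hdmem).1; simp [mem_Ioo] at this; omega
  have hnd : ¬ (posFun σ (d - 1) + 1 < posFun σ d) := by
    intro h
    have : IsSwap σ d := (isSwap_iff σ hd1 hd2).mpr h
    have : d ∈ swapSet σ := by simp [swapSet, mem_filter, mem_range, hd2, this]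
    exact (mem_sdiff.mp hdmem).2 this
  have hsw : ∀ k, 1 ≤ k → k < n → k ≠ d → posFun σ (k - 1) + 1 < posFun σ k := by
    intro k h1 h2 hkd
    have hks : k ∈ swapSet σ := by
      by_contra hks
      have : k ∈ Finset.Ioo 0 n \ swapSet σ := by
        simp [mem_sdiff, mem_Ioo, h1, h2, hks]; omega
      rw [hd] at this
      exact hkd (mem_singleton.mp this)
    simp only [swapSet, mem_filter] at hks
    exact (isSwap_iff σ h1 h2).mp hks.2
  -- chain inequalities within a run
  have chain : ∀ c s, s + c < n → (s + c < d ∨ d ≤ s) → posFun σ s + 2 * c ≤ posFun σ (s + c) := by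
    intro c
    induction c with
    | zero => intro s _ _; simp
    | succ c ih =>
      intro s h hrun
      have h2 : posFun σ s + 2 * c ≤ posFun σ (s + c) := ih s (by omega) (by omega)
      have h3 : posFun σ (s + c) + 1 < posFun σ (s + c + 1) := by
        have := hsw (s + c + 1) (by omega) (by omega) (by omega)
        simpa using this
      have he : s + (c + 1) = s + c + 1 := by omega
      rw [he]
      omega
  have chain' : ∀ s t, s ≤ t → t < n → (t < d ∨ d ≤ s) → posFun σ s + 2 * (t - s) ≤ posFun σ t := by
    intro s t hst htn hr
    have := chain (t - s) s (by omega) (by omega)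
    rwa [show s + (t - s) = t by omega] at this
  -- the values at positions 0 and 1 are the run starts 0 and d
  have h0n : (0 : ℕ) < n := by omega
  have h1n : (1 : ℕ) < n := by omega
  set a : Fin n := σ ⟨0, h0n⟩ with ha
  set b : Fin n := σ ⟨1, h1n⟩ with hb
  have hpa : posFun σ (a : ℕ) = 0 := posFun_apply σ ⟨0, h0n⟩
  have hpb : posFun σ (b : ℕ) = 1 := posFun_apply σ ⟨1, h1n⟩
  have runstart : ∀ v : Fin n, posFun σ (v : ℕ) ≤ 1 → (v : ℕ) = 0 ∨ (v : ℕ) = d := by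
    intro v hv
    by_contra hcon
    push_neg at hcon
    have := hsw (v : ℕ) (by omega) v.isLt hcon.2
    omega
  have hab : (a : ℕ) < (b : ℕ) := by
    have := (halt ⟨0, h0n⟩ ⟨1, h1n⟩ (by simp)).1 (by simp)
    exact this
  have haval : (a : ℕ) = 0 ∧ (b : ℕ) = d := by
    have h1 := runstart a (by omega)
    have h2 := runstart b (by omega)
    have hne : (a : ℕ) ≠ (b : ℕ) := by omega
    rcases h1 with h1 | h1 <;> rcases h2 with h2 | h2 <;> omega
  obtain ⟨ha0, hbd⟩ := haval
  rw [ha0] at hpa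
  rw [hbd] at hpb
  have pos0 : posFun σ 0 = 0 := hpa
  have posd : posFun σ d = 1 := hpb
  -- pin down d
  have hub : 2 * d ≤ n + 1 := by
    have := chain' 0 (d - 1) (by omega) (by omega) (by omega)
    have := posFun_lt σ (show d - 1 < n by omega)
    omega
  have hlb : n ≤ 2 * d := by
    have := chain' d (n - 1) (by omega) (by omega) (by omega)
    have := posFun_lt σ (show n - 1 < n by omega)
    omega
  -- position formulas
  have lowerA : ∀ t, t < d → 2 * t ≤ posFun σ t := by
    intro t ht
    have := chain' 0 t (by omega) (by omega) (by omega)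
    omega
  have upperA : ∀ t, t < d → posFun σ t + 2 * (d - 1 - t) ≤ n - 1 := by
    intro t ht
    have := chain' t (d - 1) (by omega) (by omega) (by omega)
    have := posFun_lt σ (show d - 1 < n by omega)
    omega
  have lowerB : ∀ t, d ≤ t → t < n → 2 * (t - d) + 1 ≤ posFun σ t := by
    intro t h1 h2
    have := chain' d t h1 h2 (by omega)
    omega
  have upperB : ∀ t, d ≤ t → t < n → posFun σ t + 2 * (n - 1 - t) ≤ n - 1 := by
    intro t h1 h2
    have := chain' t (n - 1) (by omega) (by omega) (by omega)
    have := posFun_lt σ (show n - 1 < n by omega)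
    omega
  have hAB : (∀ t, t < d → posFun σ t = 2 * t) ∧
      (∀ t, d ≤ t → t < n → posFun σ t = 2 * (t - d) + 1) := by
    rcases (show 2 * d = n ∨ 2 * d = n + 1 by omega) with hpar | hpar
    · -- 2d = n : B forced, then A by injectivity
      have posB : ∀ t, d ≤ t → t < n → posFun σ t = 2 * (t - d) + 1 := by
        intro t h1 h2
        have := lowerB t h1 h2
        have := upperB t h1 h2
        omega
      refine ⟨?_, posB⟩
      intro t ht
      have hl := lowerA t ht
      have hu := upperA t ht
      by_contra hne
      have heq : posFun σ t = 2 * t + 1 := by omega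
      have h1 : d ≤ d + t := by omega
      have h2 : d + t < n := by omega
      have := posB (d + t) h1 h2
      have : posFun σ (d + t) = posFun σ t := by omega
      have := posFun_inj σ h2 (by omega) this
      omega
    · -- 2d = n+1 : A forced, then B by injectivity
      have posA : ∀ t, t < d → posFun σ t = 2 * t := by
        intro t ht
        have := lowerA t ht
        have := upperA t ht
        omega
      refine ⟨posA, ?_⟩
      intro t h1 h2
      have hl := lowerB t h1 h2
      have hu := upperB t h1 h2
      by_contra hne
      have heq : posFun σ t = 2 * (t - d) + 2 := by omega
      have hpn := posFun_lt σ h2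
      have hu' : t - d + 1 < d := by omega
      have := posA (t - d + 1) hu'
      have : posFun σ (t - d + 1) = posFun σ t := by omega
      have := posFun_inj σ (by omega) h2 this
      omega
  obtain ⟨posA, posB⟩ := hAB
  -- conclude
  intro p
  have hp := p.isLt
  have hps : posFun σ ((σ p : Fin n) : ℕ) = (p : ℕ) := posFun_apply σ p
  rcases Nat.even_or_odd (p : ℕ) with he | ho
  · have he' : (p : ℕ) % 2 = 0 := Nat.even_iff.mp he
    rw [if_pos he']
    have hm : (p : ℕ) / 2 < d := by omega
    have := posA ((p : ℕ) / 2) hm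
    have heq : posFun σ ((p : ℕ) / 2) = posFun σ ((σ p : Fin n) : ℕ) := by omega
    have := posFun_inj σ (by omega) (σ p).isLt heq
    omega
  · have ho' : ¬ (p : ℕ) % 2 = 0 := by have := Nat.odd_iff.mp ho; omega
    rw [if_neg ho']
    have hm1 : d ≤ d + (p : ℕ) / 2 := by omega
    have hm2 : d + (p : ℕ) / 2 < n := by omega
    have := posB (d + (p : ℕ) / 2) hm1 hm2
    have heq : posFun σ (d + (p : ℕ) / 2) = posFun σ ((σ p : Fin n) : ℕ) := by omega
    have := posFun_inj σ (by omega) (σ p).isLt heq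
    omega

def altF (n : ℕ) (p : Fin n) : Fin n :=
  if h : (p : ℕ) % 2 = 0 then ⟨(p : ℕ) / 2, by have := p.isLt; omega⟩
  else ⟨(n + 1) / 2 + (p : ℕ) / 2, by have := p.isLt; omega⟩

def altG (n : ℕ) (m : Fin n) : Fin n :=
  if h : (m : ℕ) < (n + 1) / 2 then ⟨2 * (m : ℕ), by have := m.isLt; omega⟩
  else ⟨2 * ((m : ℕ) - (n + 1) / 2) + 1, by have := m.isLt; omega⟩

def altPerm (n : ℕ) : Equiv.Perm (Fin n) :=
  { toFun := altF n
    invFun := altG n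
    left_inv := by
      intro p
      have hp := p.isLt
      unfold altF altG
      by_cases h : (p : ℕ) % 2 = 0
      · rw [dif_pos h]
        have h2 : (p : ℕ) / 2 < (n + 1) / 2 := by omega
        rw [dif_pos h2]
        exact Fin.ext (by simp; omega)
      · rw [dif_neg h]
        have h2 : ¬ ((n + 1) / 2 + (p : ℕ) / 2 < (n + 1) / 2) := by omega
        rw [dif_neg h2]
        exact Fin.ext (by simp; omega)
    right_inv := by
      intro m
      have hm := m.isLt
      unfold altF altG
      by_cases h : (m : ℕ) < (n + 1) / 2
      · rw [dif_pos h]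
        have h2 : (2 * (m : ℕ)) % 2 = 0 := by omega
        rw [dif_pos h2]
        exact Fin.ext (by simp [Nat.mul_div_cancel_left])
      · rw [dif_neg h]
        have h2 : ¬ ((2 * ((m : ℕ) - (n + 1) / 2) + 1) % 2 = 0) := by omega
        rw [dif_neg h2]
        exact Fin.ext (by simp; omega) }

lemma altPerm_val {n : ℕ} (p : Fin n) :
    ((altPerm n) p : ℕ) = if (p : ℕ) % 2 = 0 then (p : ℕ) / 2 else (n + 1) / 2 + (p : ℕ) / 2 := by
  show ((altF n) p : ℕ) = _
  unfold altF
  by_cases h : (p : ℕ) % 2 = 0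
  · rw [dif_pos h, if_pos h]
  · rw [dif_neg h, if_neg h]

lemma posFun_altPerm {n : ℕ} {m : ℕ} (hm : m < n) :
    posFun (altPerm n) m =
      if m < (n + 1) / 2 then 2 * m else 2 * (m - (n + 1) / 2) + 1 := by
  have : (altPerm n).symm ⟨m, hm⟩ = altG n ⟨m, hm⟩ := rfl
  rw [posFun, dif_pos hm, this]
  unfold altG
  by_cases h : m < (n + 1) / 2
  · rw [dif_pos h, if_pos h]
  · rw [dif_neg h, if_neg h]

lemma altPerm_alternating {n : ℕ} : IsAlternating (altPerm n) := by
  intro i j hj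
  have hi := i.isLt
  have hjn := j.isLt
  constructor
  · intro he
    have he' : (i : ℕ) % 2 = 0 := Nat.even_iff.mp he
    have hj2 : ¬ ((j : ℕ) % 2 = 0) := by omega
    rw [Fin.lt_def, altPerm_val, altPerm_val, if_pos he', if_neg hj2]
    omega
  · intro ho
    have ho' : (i : ℕ) % 2 = 1 := Nat.odd_iff.mp ho
    have hj2 : (j : ℕ) % 2 = 0 := by omega
    rw [Fin.lt_def, altPerm_val, altPerm_val, if_pos hj2, if_neg (by omega)]
    omega

lemma altPerm_swapSet {n : ℕ} (hn : 2 ≤ n) :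
    swapSet (altPerm n) = ((Finset.range n).erase 0).erase ((n + 1) / 2) := by
  ext k
  simp only [swapSet, mem_filter, mem_range, mem_erase]
  constructor
  · rintro ⟨hk, hsw⟩
    have h1 : 1 ≤ k := isSwap_pos hsw
    refine ⟨?_, by omega, hk⟩
    intro hkd
    rw [isSwap_iff _ h1 hk] at hsw
    rw [posFun_altPerm (show k - 1 < n by omega), posFun_altPerm hk] at hsw
    rw [if_pos (by omega), if_neg (by omega)] at hsw
    omega
  · rintro ⟨hkd, hk0, hk⟩
    refine ⟨hk, (isSwap_iff _ (by omega) hk).mpr ?_⟩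
    rw [posFun_altPerm (show k - 1 < n by omega), posFun_altPerm hk]
    by_cases h : k < (n + 1) / 2
    · rw [if_pos (by omega), if_pos h]
      omega
    · rw [if_neg (by omega), if_neg h]
      omega

lemma altPerm_swapCount {n : ℕ} (hn : 2 ≤ n) : swapCount (altPerm n) = n - 2 := by
  unfold swapCount
  rw [altPerm_swapSet hn]
  have hd : (n + 1) / 2 ∈ (Finset.range n).erase 0 := by
    simp [mem_erase, mem_range]; omega
  rw [card_erase_of_mem hd, card_erase_of_mem (by simp [mem_range]; omega), card_range]
  omega

/-- for `n ≥ 2` there is a unique alternating permutation with `n-2` swaps,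
namely `1, 2, …, ⌈n/2⌉` in order in the odd positions and `⌈n/2⌉+1, …, n` in order in the
even positions (here written 0-indexed). -/
theorem unique_alternating_with_n_sub_two_swaps (n : ℕ) (hn : 2 ≤ n) :
    (∃! σ : Equiv.Perm (Fin n), IsAlternating σ ∧ swapCount σ = n - 2) ∧
    ∀ σ : Equiv.Perm (Fin n), IsAlternating σ → swapCount σ = n - 2 →
      ∀ p : Fin n, (σ p : ℕ) =
        if (p : ℕ) % 2 = 0 then (p : ℕ) / 2 else (n + 1) / 2 + (p : ℕ) / 2 := by

  constructor
  · refine ⟨altPerm n, ⟨altPerm_alternating, altPerm_swapCount hn⟩, ?_⟩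
    rintro τ ⟨h1, h2⟩
    apply Equiv.ext
    intro p
    apply Fin.ext
    rw [alt_formula hn τ h1 h2 p, altPerm_val]
  · intro σ h1 h2
    exact alt_formula hn σ h1 h2
end

section
/- For n ≥ 2, there is exactly one alternating permutation of length n with zero swaps, namely σ = (n-1, n, n-3, n-2, n-5, n-4, …), i.e., the permutation listing the values in consecutive ascending pairs taken in decreasing order. -/
open Finset

def gfun (n p : ℕ) : ℕ := if p % 2 = 0 then n - p - 2 else n - p

lemma gfun_lt {n : ℕ} (p : Fin n) : gfun n (p : ℕ) < n := by
  have := p.isLt; unfold gfun; split <;> omega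

noncomputable def sigma0 (n : ℕ) : Equiv.Perm (Fin n) :=
  Equiv.ofBijective (fun p => ⟨gfun n (p : ℕ), gfun_lt p⟩)
    (Finite.injective_iff_bijective.mp (by
      intro a b h
      have ha := a.isLt; have hb := b.isLt
      have h' : gfun n (a : ℕ) = gfun n (b : ℕ) := congrArg Fin.val h
      unfold gfun at h'
      exact Fin.ext (by split at h' <;> split at h' <;> omega)))

lemma sigma0_val {n : ℕ} (p : Fin n) : (sigma0 n p : ℕ) = gfun n (p : ℕ) := rfl

lemma sigma0_alt {n : ℕ} : IsAlternating (sigma0 n) := by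
  intro i j hij
  have hi := i.isLt; have hj := j.isLt
  constructor
  · intro he
    have he' : (i : ℕ) % 2 = 0 := Nat.even_iff.mp he
    rw [Fin.lt_def, sigma0_val, sigma0_val]
    unfold gfun
    rw [if_pos he', if_neg (by omega)]
    omega
  · intro ho
    have ho' : (i : ℕ) % 2 = 1 := Nat.odd_iff.mp ho
    rw [Fin.lt_def, sigma0_val, sigma0_val]
    unfold gfun
    rw [if_pos (by omega), if_neg (by omega)]
    omega

lemma sigma0_swap {n : ℕ} : swapCount (sigma0 n) = 0 := by
  unfold swapCount swapSet
  rw [Finset.card_eq_zero, Finset.filter_eq_empty_iff]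
  rintro k - ⟨i, j, hik, hjk, hlt⟩
  have hai : sigma0 n ((sigma0 n).symm i) = i := Equiv.apply_symm_apply _ _
  have hbj : sigma0 n ((sigma0 n).symm j) = j := Equiv.apply_symm_apply _ _
  have h1 : gfun n (((sigma0 n).symm i : ℕ)) = (i : ℕ) := by rw [← sigma0_val, hai]
  have h2 : gfun n (((sigma0 n).symm j : ℕ)) = (j : ℕ) := by rw [← sigma0_val, hbj]
  have ha := ((sigma0 n).symm i).isLt
  have hb := ((sigma0 n).symm j).isLt
  have hi := i.isLt; have hj := j.isLt
  unfold gfun at h1 h2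
  split at h1 <;> split at h2 <;> omega

lemma formula_of_alt_noswap {n : ℕ} (σ : Equiv.Perm (Fin n))
    (halt : IsAlternating σ)
    (hB : ∀ i j : Fin n, (j : ℕ) = (i : ℕ) + 1 →
      (σ.symm j : ℕ) ≤ (σ.symm i : ℕ) + 1) :
    ∀ p : Fin n, (σ p : ℕ) = gfun n (p : ℕ) := by
  have hinj : ∀ a b : Fin n, (σ a : ℕ) = (σ b : ℕ) → (a : ℕ) = (b : ℕ) :=
    fun a b h => congrArg Fin.val (σ.injective (Fin.ext h))
  have hinjs : ∀ a b : Fin n, (σ.symm a : ℕ) = (σ.symm b : ℕ) → (a : ℕ) = (b : ℕ) :=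
    fun a b h => congrArg Fin.val (σ.symm.injective (Fin.ext h))
  suffices H : ∀ m : ℕ, ∀ p : Fin n, (p : ℕ) = m → (σ p : ℕ) = gfun n (p : ℕ) from
    fun p => H (p : ℕ) p rfl
  intro m
  induction m using Nat.strong_induction_on with
  | _ m IH =>
  intro p hp
  have IHq : ∀ q : Fin n, (q : ℕ) < m → (σ q : ℕ) = gfun n (q : ℕ) :=
    fun q hq => IH (q : ℕ) hq q rfl
  have hpn : m < n := hp ▸ p.isLt
  rcases Nat.even_or_odd m with hm | hm
  · -- even case
    have hm2 : m % 2 = 0 := Nat.even_iff.mp hm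
    have hTopPos : ∀ w : Fin n, n - m ≤ (w : ℕ) → ∃ q : Fin n, (q : ℕ) < m ∧ σ q = w := by
      intro w hw
      have hwlt := w.isLt
      by_cases hpar : (n - (w : ℕ)) % 2 = 1
      · have h1 : n - (w : ℕ) < n := by omega
        have h2 : n - (w : ℕ) < m := by omega
        refine ⟨⟨n - (w : ℕ), h1⟩, h2, Fin.ext ?_⟩
        rw [IHq ⟨n - (w : ℕ), h1⟩ h2]
        show gfun n (n - (w : ℕ)) = (w : ℕ)
        unfold gfun; rw [if_neg (by omega)]; omega
      · have h1 : n - (w : ℕ) - 2 < n := by omega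
        have h2 : n - (w : ℕ) - 2 < m := by omega
        refine ⟨⟨n - (w : ℕ) - 2, h1⟩, h2, Fin.ext ?_⟩
        rw [IHq ⟨n - (w : ℕ) - 2, h1⟩ h2]
        show gfun n (n - (w : ℕ) - 2) = (w : ℕ)
        unfold gfun; rw [if_pos (by omega)]; omega
    have hTop : ∀ q : Fin n, m ≤ (q : ℕ) → (σ q : ℕ) < n - m := by
      intro q hq
      by_contra hcon
      push_neg at hcon
      obtain ⟨q', hq', hq'e⟩ := hTopPos (σ q) hcon
      have := hinj q' q (congrArg Fin.val hq'e)
      omega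
    have hvlt : (σ p : ℕ) < n - m := hTop p (by omega)
    set v := (σ p : ℕ) with hvdef
    have hChain : ∀ s : ℕ, ∀ w : Fin n, (w : ℕ) = v + s → v + s + 1 ≤ n - m →
        (σ.symm w : ℕ) = m + s := by
      intro s
      induction s using Nat.strong_induction_on with
      | _ s IHs =>
      intro w hw hsle
      rcases s with _ | s
      · have hwp : w = σ p := Fin.ext (by omega)
        rw [hwp, Equiv.symm_apply_apply]
        omega
      · have hWlt : v + s < n := by omega
        set W : Fin n := ⟨v + s, hWlt⟩ with hWdef
        have hWval : (W : ℕ) = v + s := rfl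
        have hprev : (σ.symm W : ℕ) = m + s := IHs s (by omega) W rfl (by omega)
        have hble : (σ.symm w : ℕ) ≤ m + s + 1 := by
          have := hB W w (by omega)
          omega
        have hbge : m ≤ (σ.symm w : ℕ) := by
          by_contra hc
          push_neg at hc
          have h1 := IHq (σ.symm w) hc
          have h2 : (σ (σ.symm w) : ℕ) = (w : ℕ) := by rw [Equiv.apply_symm_apply]
          have h4 := (σ.symm w).isLt
          unfold gfun at h1
          split at h1 <;> omega
        by_contra hne
        have hW2lt : v + ((σ.symm w : ℕ) - m) < n := by omega
        set W2 : Fin n := ⟨v + ((σ.symm w : ℕ) - m), hW2lt⟩ with hW2def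
        have hW2val : (W2 : ℕ) = v + ((σ.symm w : ℕ) - m) := rfl
        have hprev2 : (σ.symm W2 : ℕ) = m + ((σ.symm w : ℕ) - m) :=
          IHs _ (by omega) W2 rfl (by omega)
        have := hinjs W2 w (by omega)
        omega
    have hvge : n - m ≤ v + 2 := by
      by_contra hc
      push_neg at hc
      have hA : v + 1 < n := by omega
      have hBlt : v + 2 < n := by omega
      set WA : Fin n := ⟨v + 1, hA⟩ with hWA
      set WB : Fin n := ⟨v + 2, hBlt⟩ with hWB
      have hWAval : (WA : ℕ) = v + 1 := rfl
      have hWBval : (WB : ℕ) = v + 2 := rfl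
      have hAv : (σ.symm WA : ℕ) = m + 1 := hChain 1 WA rfl (by omega)
      have hBv : (σ.symm WB : ℕ) = m + 2 := hChain 2 WB rfl (by omega)
      have halt2 := (halt (σ.symm WA) (σ.symm WB) (by omega)).2
        (by rw [hAv]; exact Nat.odd_iff.mpr (by omega))
      rw [Equiv.apply_symm_apply, Equiv.apply_symm_apply, Fin.lt_def] at halt2
      omega
    by_cases hlast : m + 1 = n
    · show (σ p : ℕ) = gfun n (p : ℕ)
      unfold gfun
      rw [if_pos (by omega)]
      omega
    · have hq1 : m + 1 < n := by omega
      set Q : Fin n := ⟨m + 1, hq1⟩ with hQ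
      have hQval : (Q : ℕ) = m + 1 := rfl
      have hQtop : (σ Q : ℕ) < n - m := hTop Q (by omega)
      have hvne : v ≠ n - m - 1 := by
        intro he
        have halt3 := (halt p Q (by omega)).1 (by rw [hp]; exact hm)
        rw [Fin.lt_def] at halt3
        omega
      show (σ p : ℕ) = gfun n (p : ℕ)
      unfold gfun
      rw [if_pos (by omega)]
      omega
  · -- odd case
    have hm2 : m % 2 = 1 := Nat.odd_iff.mp hm
    have hpa : m - 1 < n := by omega
    set PA : Fin n := ⟨m - 1, hpa⟩ with hPA
    have hPAval : (PA : ℕ) = m - 1 := rfl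
    have hIHpa : (σ PA : ℕ) = gfun n ((PA : ℕ)) := IHq PA (by omega)
    have hgpa : gfun n ((PA : ℕ)) = n - m - 1 := by
      show gfun n (m - 1) = n - m - 1
      unfold gfun; rw [if_pos (by omega)]; omega
    have hWa : n - m - 1 < n := by omega
    have hWb : n - m < n := by omega
    set Wa : Fin n := ⟨n - m - 1, hWa⟩ with hWadef
    set Wb : Fin n := ⟨n - m, hWb⟩ with hWbdef
    have hWaval : (Wa : ℕ) = n - m - 1 := rfl
    have hWbval : (Wb : ℕ) = n - m := rfl
    have hσPA : σ PA = Wa := Fin.ext (by rw [hIHpa, hgpa])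
    have hsymmWa : (σ.symm Wa : ℕ) = m - 1 := by
      rw [← hσPA, Equiv.symm_apply_apply]
    have hble : (σ.symm Wb : ℕ) ≤ m := by
      have := hB Wa Wb (by omega)
      omega
    have hbge : m ≤ (σ.symm Wb : ℕ) := by
      by_contra hc
      push_neg at hc
      have h1 := IHq (σ.symm Wb) hc
      have h2 : (σ (σ.symm Wb) : ℕ) = n - m := by
        rw [Equiv.apply_symm_apply]
      have h4 := (σ.symm Wb).isLt
      unfold gfun at h1
      split at h1 <;> omega
    have hbp : σ.symm Wb = p := Fin.ext (by omega)
    have hσp : σ p = Wb := by rw [← hbp, Equiv.apply_symm_apply]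
    have hfin : (σ p : ℕ) = n - m := by rw [hσp]
    show (σ p : ℕ) = gfun n (p : ℕ)
    unfold gfun
    rw [if_neg (by omega)]
    omega

/-- for `n ≥ 2` there is a unique alternating permutation with zero swaps,
namely `(n-1, n, n-3, n-2, n-5, n-4, …)` (here written 0-indexed). -/
theorem unique_alternating_with_zero_swaps (n : ℕ) (hn : 2 ≤ n) :
    (∃! σ : Equiv.Perm (Fin n), IsAlternating σ ∧ swapCount σ = 0) ∧
    ∀ σ : Equiv.Perm (Fin n), IsAlternating σ → swapCount σ = 0 →
      ∀ p : Fin n, (σ p : ℕ) =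
        if (p : ℕ) % 2 = 0 then n - (p : ℕ) - 2 else n - (p : ℕ) := by
  have key : ∀ σ : Equiv.Perm (Fin n), IsAlternating σ → swapCount σ = 0 →
      ∀ p : Fin n, (σ p : ℕ) = gfun n (p : ℕ) := by
    intro σ h1 h2
    apply formula_of_alt_noswap σ h1
    intro i j hij
    by_contra hc
    push_neg at hc
    have hk : IsSwap σ ((i : ℕ) + 1) := ⟨i, j, rfl, hij, hc⟩
    have hmem : ((i : ℕ) + 1) ∈ swapSet σ :=
      Finset.mem_filter.mpr ⟨Finset.mem_range.mpr (by have := j.isLt; omega), hk⟩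
    have := Finset.card_pos.mpr ⟨_, hmem⟩
    unfold swapCount at h2
    omega
  have hfor : ∀ σ : Equiv.Perm (Fin n), IsAlternating σ → swapCount σ = 0 →
      ∀ p : Fin n, (σ p : ℕ) =
        if (p : ℕ) % 2 = 0 then n - (p : ℕ) - 2 else n - (p : ℕ) := by
    intro σ h1 h2 p
    rw [key σ h1 h2 p]; rfl
  refine ⟨⟨sigma0 n, ⟨sigma0_alt, sigma0_swap⟩, ?_⟩, hfor⟩
  rintro τ ⟨ht1, ht2⟩
  apply Equiv.ext
  intro x
  apply Fin.ext
  rw [key τ ht1 ht2 x]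
  exact (sigma0_val x).symm
end

section
/- The swap of any alternating permutation of length n is at most n-2: for every alternating permutation σ ∈ S_n with n ≥ 2, swap(σ) ≤ n - 2. -/
open Finset

/-- every alternating permutation of length `n ≥ 2` has at most `n-2` swaps. -/
theorem swapCount_le (n : ℕ) (hn : 2 ≤ n) (σ : Equiv.Perm (Fin n))
    (h : IsAlternating σ) : swapCount σ ≤ n - 2 := by
  set a : Fin n := ⟨1, by omega⟩ with ha
  set z : Fin n := ⟨0, by omega⟩ with hz
  have hlt : σ z < σ a := ((h z a (by simp [ha, hz])).1) (by simp [hz])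
  have hσa : 1 ≤ (σ a : ℕ) := by
    have := Fin.lt_iff_val_lt_val.mp hlt; omega
  have hsub : swapSet σ ⊆ ((Finset.range n).erase 0).erase (σ a : ℕ) := by
    intro k hk
    simp only [swapSet, Finset.mem_filter] at hk
    obtain ⟨hkr, i, j, hi, hj, hij⟩ := hk
    refine Finset.mem_erase.mpr ⟨?_, Finset.mem_erase.mpr ⟨by omega, hkr⟩⟩
    intro hkeq
    have : j = σ a := Fin.ext (by omega)
    subst this
    simp only [Equiv.symm_apply_apply] at hij
    simp [ha] at hij
  calc swapCount σ ≤ (((Finset.range n).erase 0).erase (σ a : ℕ)).card :=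
        Finset.card_le_card hsub
    _ = n - 2 := by
        rw [Finset.card_erase_of_mem (Finset.mem_erase.mpr
              ⟨by omega, Finset.mem_range.mpr (σ a).isLt⟩),
            Finset.card_erase_of_mem (Finset.mem_range.mpr (by omega)),
            Finset.card_range]
        omega
end

section
/- There is a unique alternating permutation of length n maximizing inversion number over all alternating permutations of length n. For odd n it is (n-1, n, n-3, n-2, …, 4, 5, 2, 3, 1). -/
open Finset

/-! Every alternating permutation ascends at each pair of positions `(2k, 2k+1)`, and
`maxAlternating n` ascends there and nowhere else. Since the inversions and the ascending pairs
of a permutation together make up all pairs `i < j`, `maxAlternating n` has the most inversions,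
and any other maximizer has the same ascending pairs, which determine a permutation. -/

theorem Equiv.Perm.eq_of_forall_lt_iff {α : Type*} [LinearOrder α] [Finite α]
    {σ τ : Equiv.Perm α} (h : ∀ i j, σ i < σ j ↔ τ i < τ j) : σ = τ := by
  have hmono : StrictMono (σ ∘ τ.symm) := fun a b hab => by
    simpa [h] using hab
  ext x
  simpa using congrFun hmono.eq_id (τ x)

section AscentPairs

variable {n : ℕ}

def ascentPairs (σ : Equiv.Perm (Fin n)) : Finset (Fin n × Fin n) :=
  univ.filter fun p => p.1 < p.2 ∧ σ p.1 < σ p.2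

lemma mem_ascentPairs {σ : Equiv.Perm (Fin n)} {p : Fin n × Fin n} :
    p ∈ ascentPairs σ ↔ p.1 < p.2 ∧ σ p.1 < σ p.2 := by
  simp [ascentPairs]

lemma invNum_add_card_ascentPairs (σ : Equiv.Perm (Fin n)) :
    invNum σ + #(ascentPairs σ) = #(univ.filter fun p : Fin n × Fin n => p.1 < p.2) := by
  have hasc : ascentPairs σ =
      (univ.filter fun p : Fin n × Fin n => p.1 < p.2).filter fun p => ¬σ p.2 < σ p.1 := by
    ext p
    simp only [mem_ascentPairs, filter_filter, mem_filter, mem_univ, true_and, not_lt]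
    exact and_congr_right fun hlt => (le_iff_lt_or_eq.trans
      (or_iff_left (σ.injective.ne hlt.ne))).symm
  rw [invNum, hasc, ← filter_filter]
  exact card_filter_add_card_filter_not _

lemma ascentPairs_injective : Function.Injective (ascentPairs (n := n)) := by
  intro σ τ h
  have hasc : ∀ i j, i < j → (σ i < σ j ↔ τ i < τ j) := fun i j hij => by
    simpa [mem_ascentPairs, hij] using congrArg ((i, j) ∈ ·) h
  refine Equiv.Perm.eq_of_forall_lt_iff fun i j => ?_
  rcases lt_trichotomy i j with hij | rfl | hji
  · exact hasc i j hij
  · simp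
  · have hσ := σ.injective.ne hji.ne'
    have hτ := τ.injective.ne hji.ne'
    rw [← not_iff_not, not_lt, not_lt, le_iff_lt_or_eq, le_iff_lt_or_eq]
    simp only [Ne.symm hσ, Ne.symm hτ, or_false]
    exact hasc j i hji

end AscentPairs

-- For odd `n` the last position `n - 1` is even, and `n - (n - 1) - 2` truncates to the
-- required value `0`.
def maxAlternatingFun (n : ℕ) (p : Fin n) : Fin n :=
  ⟨if (p : ℕ) % 2 = 0 then n - (p : ℕ) - 2 else n - (p : ℕ), by
    have := p.isLt; split <;> omega⟩

lemma maxAlternatingFun_lt_iff {n : ℕ} {i j : Fin n} (hij : i < j) :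
    maxAlternatingFun n i < maxAlternatingFun n j ↔ Even (i : ℕ) ∧ (j : ℕ) = i + 1 := by
  have := j.isLt
  rw [Fin.lt_def] at hij
  simp only [maxAlternatingFun, Fin.mk_lt_mk, Nat.even_iff]
  split_ifs <;> omega

lemma maxAlternatingFun_injective (n : ℕ) : Function.Injective (maxAlternatingFun n) := by
  intro p q h
  have := p.isLt; have := q.isLt
  simp only [maxAlternatingFun, Fin.mk.injEq] at h
  exact Fin.ext (by split_ifs at h <;> omega)

noncomputable def maxAlternating (n : ℕ) : Equiv.Perm (Fin n) :=
  Equiv.ofBijective _ (maxAlternatingFun_injective n).bijective_of_finite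

lemma ascentPairs_maxAlternating (n : ℕ) : ascentPairs (maxAlternating n) =
    univ.filter fun p : Fin n × Fin n => Even (p.1 : ℕ) ∧ (p.2 : ℕ) = p.1 + 1 := by
  ext ⟨i, j⟩
  simp only [mem_ascentPairs, mem_filter, mem_univ, true_and]
  constructor
  · rintro ⟨hij, hlt⟩
    exact (maxAlternatingFun_lt_iff hij).mp hlt
  · rintro ⟨hi, hj⟩
    have hij : i < j := Fin.lt_def.mpr (by omega)
    exact ⟨hij, (maxAlternatingFun_lt_iff hij).mpr ⟨hi, hj⟩⟩

lemma isAlternating_maxAlternating (n : ℕ) : IsAlternating (maxAlternating n) := by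
  intro i j hj
  have hij : i < j := Fin.lt_def.mpr (by omega)
  have hasc : maxAlternating n i < maxAlternating n j ↔ Even (i : ℕ) :=
    (maxAlternatingFun_lt_iff hij).trans (and_iff_left hj)
  refine ⟨hasc.mpr, fun hodd => ?_⟩
  have hne := (maxAlternating n).injective.ne hij.ne
  exact lt_of_le_of_ne (not_lt.mp (hasc.not.mpr (Nat.not_even_iff_odd.mpr hodd))) hne.symm

namespace IsAlternating

variable {n : ℕ} {τ : Equiv.Perm (Fin n)}

lemma ascentPairs_maxAlternating_subset (hτ : IsAlternating τ) :
    ascentPairs (maxAlternating n) ⊆ ascentPairs τ := by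
  rw [ascentPairs_maxAlternating]
  rintro ⟨i, j⟩ hp
  simp only [mem_filter, mem_univ, true_and] at hp
  obtain ⟨hi, hj : (j : ℕ) = i + 1⟩ := hp
  exact mem_ascentPairs.mpr ⟨show i < j from Fin.lt_def.mpr (by omega), (hτ i j hj).1 hi⟩

lemma invNum_le_maxAlternating (hτ : IsAlternating τ) :
    invNum τ ≤ invNum (maxAlternating n) := by
  have := card_le_card hτ.ascentPairs_maxAlternating_subset
  have := invNum_add_card_ascentPairs τ
  have := invNum_add_card_ascentPairs (maxAlternating n)
  omega

lemma eq_maxAlternating (hτ : IsAlternating τ) (hmax : invNum (maxAlternating n) ≤ invNum τ) :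
    τ = maxAlternating n := by
  have hsub := hτ.ascentPairs_maxAlternating_subset
  have hcard : #(ascentPairs τ) ≤ #(ascentPairs (maxAlternating n)) := by
    have := invNum_add_card_ascentPairs τ
    have := invNum_add_card_ascentPairs (maxAlternating n)
    omega
  exact ascentPairs_injective (eq_of_subset_of_card_le hsub hcard).symm

end IsAlternating

/-- there is a unique alternating permutation of length `n` maximizing the
inversion number; for odd `n` it is `(n-1, n, n-3, n-2, …, 4, 5, 2, 3, 1)`
(here written 0-indexed). -/
theorem unique_max_inversion_alternating (n : ℕ) :
    (∃! σ : Equiv.Perm (Fin n), IsAlternating σ ∧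
      ∀ τ : Equiv.Perm (Fin n), IsAlternating τ → invNum τ ≤ invNum σ) ∧
    (Odd n → ∀ σ : Equiv.Perm (Fin n),
      (IsAlternating σ ∧ ∀ τ : Equiv.Perm (Fin n), IsAlternating τ → invNum τ ≤ invNum σ) →
      ∀ p : Fin n, (σ p : ℕ) =
        if (p : ℕ) % 2 = 0 then n - (p : ℕ) - 2 else n - (p : ℕ)) := by
  have hmaxAlt := isAlternating_maxAlternating n
  refine ⟨⟨maxAlternating n, ⟨hmaxAlt, fun τ hτ => hτ.invNum_le_maxAlternating⟩, ?_⟩, ?_⟩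
  · rintro τ ⟨hτ, hmax⟩
    exact hτ.eq_maxAlternating (hmax _ hmaxAlt)
  · rintro - σ ⟨hσ, hmax⟩ p
    rw [hσ.eq_maxAlternating (hmax _ hmaxAlt)]
    rfl
end

section
/- Two simplices Δ^σ and Δ^τ of the canonical triangulation of the order polytope of the zig-zag poset share a common facet if and only if σ swaps to τ or τ swaps to σ. Equivalently, in terms of vertex sets: vert(σ) and vert(τ) differ in exactly one element if and only if τ is obtained from σ (or σ from τ) by exchanging values i and i+1 at a swap position. -/
open Finset

section Aux

variable {n : ℕ}

lemma card_filter_coe_lt {k : ℕ} (hk : k ≤ n) :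
    (Finset.univ.filter (fun m : Fin n => (m : ℕ) < k)).card = k := by
  rcases eq_or_lt_of_le hk with heq | hk
  · have : (Finset.univ.filter (fun m : Fin n => (m : ℕ) < k)) = Finset.univ := by
      apply Finset.filter_true_of_mem
      intro m _
      exact lt_of_lt_of_le m.isLt (le_of_eq heq.symm)
    simp [this, heq]
  · have : (Finset.univ.filter (fun m : Fin n => (m : ℕ) < k)) = Finset.Iio ⟨k, hk⟩ := by
      ext m; simp [Fin.lt_def]
    rw [this, Fin.card_Iio]

lemma card_vtx_zeros (σ : Equiv.Perm (Fin n)) {k : ℕ} (hk : k ≤ n) :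
    (Finset.univ.filter (fun j => vtx σ k j = 0)).card = k := by
  have he : (Finset.univ.filter (fun j => vtx σ k j = 0))
      = (Finset.univ.filter (fun m : Fin n => (m : ℕ) < k)).image σ.symm := by
    ext j
    simp only [Finset.mem_filter, Finset.mem_univ, true_and, Finset.mem_image, vtx]
    constructor
    · intro hj
      by_cases h : (σ j : ℕ) < k
      · exact ⟨σ j, h, by simp⟩
      · simp [h] at hj
    · rintro ⟨m, hm, rfl⟩; simp [hm]
  rw [he, Finset.card_image_of_injective _ σ.symm.injective, card_filter_coe_lt hk]

lemma vtx_inj {σ τ : Equiv.Perm (Fin n)} {k k' : ℕ} (hk : k ≤ n) (hk' : k' ≤ n)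
    (h : vtx σ k = vtx τ k') : k = k' := by
  rw [← card_vtx_zeros σ hk, ← card_vtx_zeros τ hk']
  congr 1
  ext j
  simp [h]

lemma vtx_eq_iff_pt {σ τ : Equiv.Perm (Fin n)} {k : ℕ}
    (h : vtx σ k = vtx τ k) (x : Fin n) : (σ x : ℕ) < k ↔ (τ x : ℕ) < k := by
  by_cases h1 : (σ x : ℕ) < k <;> by_cases h2 : (τ x : ℕ) < k
  · exact iff_of_true h1 h2
  · exfalso; have := congrFun h x; simp [vtx, h1, h2] at this
  · exfalso; have := congrFun h x; simp [vtx, h1, h2] at this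
  · exact iff_of_false h1 h2

/-- The set of indices `k` where the two vertex sequences differ. -/
def diffSet (σ τ : Equiv.Perm (Fin n)) : Finset ℕ :=
  (Finset.range (n + 1)).filter (fun k => vtx σ k ≠ vtx τ k)

lemma diffSet_comm (σ τ : Equiv.Perm (Fin n)) : diffSet τ σ = diffSet σ τ := by
  unfold diffSet
  apply Finset.filter_congr
  intro k _
  simp [ne_comm]

lemma sdiff_eq_image (σ τ : Equiv.Perm (Fin n)) :
    vert σ \ vert τ = (diffSet σ τ).image (vtx σ) := by
  ext x
  simp only [Finset.mem_sdiff, vert, diffSet, Finset.mem_image, Finset.mem_filter,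
    Finset.mem_range]
  constructor
  · rintro ⟨⟨k, hk, rfl⟩, hx⟩
    refine ⟨k, ⟨hk, ?_⟩, rfl⟩
    intro he
    exact hx ⟨k, hk, he.symm⟩
  · rintro ⟨k, ⟨hk, hne⟩, rfl⟩
    refine ⟨⟨k, hk, rfl⟩, ?_⟩
    rintro ⟨k', hk', he⟩
    have : k' = k := vtx_inj (by omega) (by omega) he
    subst this
    exact hne he.symm

lemma card_sdiff_vert (σ τ : Equiv.Perm (Fin n)) :
    (vert σ \ vert τ).card = (diffSet σ τ).card := by
  rw [sdiff_eq_image]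
  apply Finset.card_image_of_injOn
  intro a ha b hb h
  simp only [diffSet, Finset.mem_coe, Finset.mem_filter, Finset.mem_range] at ha hb
  exact vtx_inj (by omega) (by omega) h

end Aux
lemma swapsTo_diffSet {n : ℕ} {σ τ : Equiv.Perm (Fin n)} (h : SwapsTo σ τ) :
    ∃ i : Fin n, diffSet σ τ = {(i : ℕ) + 1} := by
  obtain ⟨i, j, hj, hlt, rfl⟩ := h
  refine ⟨i, ?_⟩
  ext k
  simp only [diffSet, Finset.mem_filter, Finset.mem_range, Finset.mem_singleton]
  constructor
  · rintro ⟨hk, hne⟩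
    by_contra hki
    apply hne
    funext x
    simp only [vtx, Equiv.Perm.mul_apply]
    refine if_congr ?_ rfl rfl
    by_cases hx1 : σ x = i
    · rw [hx1, Equiv.swap_apply_left]
      omega
    · by_cases hx2 : σ x = j
      · rw [hx2, Equiv.swap_apply_right]
        omega
      · rw [Equiv.swap_apply_of_ne_of_ne hx1 hx2]
  · rintro rfl
    refine ⟨by omega, fun he => ?_⟩
    have := congrFun he (σ.symm i)
    simp only [vtx, Equiv.Perm.mul_apply, Equiv.apply_symm_apply,
      Equiv.swap_apply_left] at this
    rw [if_pos (by omega), if_neg (by omega)] at this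
    exact absurd this (by norm_num)
lemma diffSet_card_one_swapsTo {n : ℕ} {σ τ : Equiv.Perm (Fin n)}
    (hσ : IsAlternating σ) (hτ : IsAlternating τ)
    (h : (diffSet σ τ).card = 1) : SwapsTo σ τ ∨ SwapsTo τ σ := by
  obtain ⟨k0, hk0⟩ := Finset.card_eq_one.mp h
  have hk0mem : k0 ∈ diffSet σ τ := hk0 ▸ Finset.mem_singleton_self k0
  simp only [diffSet, Finset.mem_filter, Finset.mem_range] at hk0mem
  obtain ⟨hk0n, hk0ne⟩ := hk0mem
  have hagree : ∀ k, k ≤ n → k ≠ k0 → vtx σ k = vtx τ k := by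
    intro k hk hne
    by_contra hne2
    have hmem : k ∈ diffSet σ τ := by
      simp only [diffSet, Finset.mem_filter, Finset.mem_range]
      exact ⟨by omega, hne2⟩
    rw [hk0, Finset.mem_singleton] at hmem
    exact hne hmem
  have h0 : k0 ≠ 0 := by
    rintro rfl
    exact hk0ne (funext fun x => by simp [vtx])
  have hnn : k0 ≠ n := by
    rintro rfl
    exact hk0ne (funext fun x => by simp [vtx, (σ x).isLt, (τ x).isLt])
  have hk0lt : k0 < n := lt_of_le_of_ne (by omega) hnn
  have h1 : 1 ≤ k0 := by omega
  set i : Fin n := ⟨k0 - 1, by omega⟩ with hi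
  set j : Fin n := ⟨k0, hk0lt⟩ with hjdef
  have hij : i ≠ j := by
    intro he
    have := congrArg (Fin.val) he
    simp only [hi, hjdef] at this
    omega
  -- agreement of the inverses away from i, j
  have hsymm : ∀ m : Fin n, (m : ℕ) ≠ k0 - 1 → (m : ℕ) ≠ k0 → σ.symm m = τ.symm m := by
    intro m hm1 hm2
    have e1 := vtx_eq_iff_pt (hagree (m : ℕ) (le_of_lt m.isLt) (by omega)) (σ.symm m)
    have e2 := vtx_eq_iff_pt (hagree ((m : ℕ) + 1) m.isLt (by omega)) (σ.symm m)
    rw [σ.apply_symm_apply m] at e1 e2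
    have hv : (τ (σ.symm m) : ℕ) = (m : ℕ) := by omega
    have hτm : τ (σ.symm m) = m := Fin.ext hv
    exact ((Equiv.symm_apply_eq τ).mpr hτm.symm).symm
  -- τ.symm i and τ.symm j are among σ.symm i, σ.symm j
  have hmem : ∀ m : Fin n, ((m : ℕ) = k0 - 1 ∨ (m : ℕ) = k0) →
      τ.symm m = σ.symm i ∨ τ.symm m = σ.symm j := by
    intro m hm
    by_cases hv1 : (σ (τ.symm m) : ℕ) = k0 - 1
    · left
      have h' : σ (τ.symm m) = i := Fin.ext hv1
      rw [← h', Equiv.symm_apply_apply]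
    · by_cases hv2 : (σ (τ.symm m) : ℕ) = k0
      · right
        have h' : σ (τ.symm m) = j := Fin.ext hv2
        rw [← h', Equiv.symm_apply_apply]
      · exfalso
        have hs := hsymm (σ (τ.symm m)) hv1 hv2
        rw [Equiv.symm_apply_apply] at hs
        have hm' : m = σ (τ.symm m) := τ.symm.injective hs
        rcases hm with hc | hc
        · exact hv1 (by rw [← hm']; exact hc)
        · exact hv2 (by rw [← hm']; exact hc)
  rcases hmem i (Or.inl rfl) with hA | hA
  · -- τ.symm i = σ.symm i : then σ = τ, contradiction
    exfalso
    have hB : τ.symm j = σ.symm j := by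
      rcases hmem j (Or.inr rfl) with hB | hB
      · exfalso
        apply hij
        apply τ.symm.injective
        rw [hB, ← hA]
      · exact hB
    have hs : σ.symm = τ.symm := by
      apply Equiv.ext
      intro m
      by_cases hv1 : (m : ℕ) = k0 - 1
      · have : m = i := Fin.ext hv1
        rw [this, hA]
      · by_cases hv2 : (m : ℕ) = k0
        · have : m = j := Fin.ext hv2
          rw [this, hB]
        · exact hsymm m hv1 hv2
    have : σ = τ := by
      rw [← σ.symm_symm, ← τ.symm_symm, hs]
    exact hk0ne (by rw [this])
  · -- τ.symm i = σ.symm j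
    have hB : τ.symm j = σ.symm i := by
      rcases hmem j (Or.inr rfl) with hB | hB
      · exact hB
      · exfalso
        apply hij
        apply τ.symm.injective
        rw [hB, ← hA]
    have hmul : τ = Equiv.swap i j * σ := by
      apply Equiv.ext
      intro x
      simp only [Equiv.Perm.mul_apply]
      by_cases hx1 : σ x = i
      · have hxe : x = σ.symm i := by rw [← hx1, Equiv.symm_apply_apply]
        rw [hx1, Equiv.swap_apply_left, hxe, ← hB, Equiv.apply_symm_apply]
      · by_cases hx2 : σ x = j
        · have hxe : x = σ.symm j := by rw [← hx2, Equiv.symm_apply_apply]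
          rw [hx2, Equiv.swap_apply_right, hxe, ← hA, Equiv.apply_symm_apply]
        · rw [Equiv.swap_apply_of_ne_of_ne hx1 hx2]
          have hv1 : (σ x : ℕ) ≠ k0 - 1 := fun hh => hx1 (Fin.ext hh)
          have hv2 : (σ x : ℕ) ≠ k0 := fun hh => hx2 (Fin.ext hh)
          have hs := hsymm (σ x) hv1 hv2
          rw [Equiv.symm_apply_apply] at hs
          exact (Equiv.apply_eq_iff_eq_symm_apply τ).mpr hs
    have hji : (j : ℕ) = (i : ℕ) + 1 := by
      simp only [hi, hjdef]
      omega
    set P : Fin n := σ.symm i with hP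
    set Q : Fin n := σ.symm j with hQ
    have hPQ : P ≠ Q := fun he => hij (σ.symm.injective he)
    have hσP : σ P = i := σ.apply_symm_apply i
    have hσQ : σ Q = j := σ.apply_symm_apply j
    have hτP : τ P = j := by rw [← hB, Equiv.apply_symm_apply]
    have hτQ : τ Q = i := by rw [← hA, Equiv.apply_symm_apply]
    have hij_lt : i < j := by
      rw [Fin.lt_def]
      simp only [hi, hjdef]
      omega
    have hji_not : ¬ (j < i) := by
      rw [Fin.lt_def]
      simp only [hi, hjdef]
      omega
    rcases lt_trichotomy ((P : ℕ) + 1) ((Q : ℕ)) with hlt | heq | hgt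
    · exact Or.inl ⟨i, j, hji, hlt, hmul⟩
    · -- Q = P + 1 : contradicts alternating
      exfalso
      have hsa := hσ P Q heq.symm
      have hta := hτ P Q heq.symm
      rcases Nat.even_or_odd (P : ℕ) with hpar | hpar
      · have := hta.1 hpar
        rw [hτP, hτQ] at this
        exact hji_not this
      · have := hsa.2 hpar
        rw [hσP, hσQ] at this
        exact hji_not this
    · -- (Q:ℕ) < (P:ℕ)+1 and P ≠ Q, so Q < P; split on Q+1 = P or Q+1 < P
      have hQP : (Q : ℕ) < (P : ℕ) := by
        rcases Nat.lt_or_ge (Q : ℕ) (P : ℕ) with h' | h'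
        · exact h'
        · exfalso
          apply hPQ
          apply Fin.ext
          omega
      rcases eq_or_lt_of_le (Nat.succ_le_of_lt hQP) with heq2 | hlt2
      · -- P = Q + 1 : contradicts alternating
        exfalso
        have hsa := hσ Q P heq2.symm
        have hta := hτ Q P heq2.symm
        rcases Nat.even_or_odd (Q : ℕ) with hpar | hpar
        · have := hsa.1 hpar
          rw [hσP, hσQ] at this
          exact hji_not this
        · have := hta.2 hpar
          rw [hτP, hτQ] at this
          exact hji_not this
      · -- Q + 1 < P : SwapsTo τ σ
        refine Or.inr ⟨i, j, hji, ?_, ?_⟩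
        · rw [hA, hB]
          exact hlt2
        · rw [hmul, ← mul_assoc, Equiv.swap_mul_self, one_mul]

/-- the simplices `Δ^σ` and `Δ^τ` share a common facet (their vertex sets
differ in exactly one element) iff `σ` swaps to `τ` or `τ` swaps to `σ`. -/
theorem share_facet_iff_swapsTo (n : ℕ) (σ τ : Equiv.Perm (Fin n))
    (hσ : IsAlternating σ) (hτ : IsAlternating τ) :
    ((vert σ \ vert τ).card = 1 ∧ (vert τ \ vert σ).card = 1) ↔
      (SwapsTo σ τ ∨ SwapsTo τ σ) := by
  rw [card_sdiff_vert, card_sdiff_vert, diffSet_comm σ τ, and_self]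
  constructor
  · exact diffSet_card_one_swapsTo hσ hτ
  · rintro (h | h)
    · obtain ⟨i, hd⟩ := swapsTo_diffSet h
      rw [hd, Finset.card_singleton]
    · obtain ⟨i, hd⟩ := swapsTo_diffSet h
      rw [diffSet_comm σ τ] at hd
      rw [hd, Finset.card_singleton]
end

section
/- For alternating permutations σ, τ of length n, the vertex sets satisfy: vert(σ) ⊆ vert(τ) implies σ = τ, where vert(σ) = {v_0^σ, …, v_n^σ} with v_0^σ the all-ones vector and v_i^σ = v_{i-1}^σ - e_{σ⁻¹(i)}. -/
open Finset

lemma card_filter_lt_fin (n k : ℕ) (hk : k ≤ n) :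
    (Finset.univ.filter fun x : Fin n => (x:ℕ) < k).card = k := by
  have : (Finset.univ.filter fun x : Fin n => (x:ℕ) < k) = Finset.map (Fin.castLEEmb hk) Finset.univ := by
    ext x
    simp only [Finset.mem_filter, Finset.mem_univ, true_and, Finset.mem_map, Fin.castLEEmb_apply]
    constructor
    · intro hx; exact ⟨⟨x, hx⟩, rfl⟩
    · rintro ⟨y, rfl⟩; exact y.2

  simp [this]

lemma card_vtx_zero {n : ℕ} (σ : Equiv.Perm (Fin n)) (k : ℕ) (hk : k ≤ n) :
    (Finset.univ.filter fun j : Fin n => vtx σ k j = 0).card = k := by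
  have h1 : (Finset.univ.filter fun j : Fin n => vtx σ k j = 0)
      = (Finset.univ.filter fun j : Fin n => (σ j : ℕ) < k) := by
    ext j; simp [vtx]
  rw [h1]
  have h2 : (Finset.univ.filter fun j : Fin n => (σ j : ℕ) < k).card
      = (Finset.univ.filter fun x : Fin n => (x:ℕ) < k).card :=
    Finset.card_equiv σ (by simp)
  rw [h2]; exact card_filter_lt_fin n k hk

/-- for alternating permutations, `vert(σ) ⊆ vert(τ)` implies `σ = τ`. -/
theorem vert_subset_imp_eq (n : ℕ) (σ τ : Equiv.Perm (Fin n))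
    (hσ : IsAlternating σ) (hτ : IsAlternating τ) (h : vert σ ⊆ vert τ) : σ = τ := by
  have key : ∀ k ≤ n, vtx σ k = vtx τ k := by
    intro k hk
    have hmem : vtx σ k ∈ vert τ := h (Finset.mem_image_of_mem _ (Finset.mem_range.mpr (by omega)))
    obtain ⟨m, hm, hvm⟩ := Finset.mem_image.mp hmem
    have hm' : m ≤ n := by simpa using Nat.lt_succ_iff.mp (Finset.mem_range.mp hm)
    have hc : k = m := by
      have := card_vtx_zero τ m hm'
      rw [hvm] at this
      rw [card_vtx_zero σ k hk] at this
      exact this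
    subst hc; exact hvm.symm
  ext j
  have h1 : vtx σ ((σ j : ℕ) + 1) = vtx τ ((σ j : ℕ) + 1) := key _ (σ j).2
  have h2 : vtx σ ((τ j : ℕ) + 1) = vtx τ ((τ j : ℕ) + 1) := key _ (τ j).2
  have e1 := congrFun h1 j
  have e2 := congrFun h2 j
  simp only [vtx] at e1 e2
  by_cases hlt : (σ j : ℕ) < (τ j : ℕ)
  · have hne : ¬ ((τ j : ℕ) < (σ j : ℕ) + 1) := by omega
    simp [hne] at e1
  by_cases hgt : (τ j : ℕ) < (σ j : ℕ)
  · have hne : ¬ ((σ j : ℕ) < (τ j : ℕ) + 1) := by omega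
    simp [hne] at e2
  have hval : (σ j : ℕ) = (τ j : ℕ) := by omega
  exact hval
end

section
/- An alternating permutation σ maximizes inversion number over all alternating permutations τ whose vertex set contains the exclusion set of σ: if excl(σ) ⊆ vert(τ) for an alternating τ, then inv(τ) ≤ inv(σ). -/
/-!
A vertex `vtx τ m` determines `m` (it has `m` zeros), so `excl σ ⊆ vert τ` says that `σ` and `τ`
have the same cuts `{x | σ x < c}` at every swap `c` of `σ`. Exchanging the values `k - 1` and
`k` at a swap `k` of `τ` keeps `τ` alternating, adds one inversion, and moves only the cut at `k`.
So as long as `τ` has a swap that `σ` lacks we may climb; once it has none, `σ` and `τ` agree at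
the cuts of all swaps of either, and alternating permutations are determined by such cuts: within
a swap-free block of values the position can move right by at most one step per value, and only
from an even position, which pins down where the smallest value of the block sits.
-/

open Finset

section

variable {n : ℕ}

lemma vtx_eq_vtx_iff {σ τ : Equiv.Perm (Fin n)} {m m' : ℕ} :
    vtx σ m = vtx τ m' ↔ ∀ x, ((σ x : ℕ) < m ↔ (τ x : ℕ) < m') := by
  simp only [funext_iff, vtx]
  refine forall_congr' fun x => ?_
  by_cases (σ x : ℕ) < m <;> by_cases (τ x : ℕ) < m' <;> simp [*]

lemma card_filter_apply_lt (π : Equiv.Perm (Fin n)) {m : ℕ} (hm : m ≤ n) :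
    #{x | (π x : ℕ) < m} = m := by
  rw [card_equiv π (t := {i : Fin n | (i : ℕ) < m}) (by simp), Fin.card_filter_val_lt]
  omega

lemma eq_of_vtx_eq_vtx {σ τ : Equiv.Perm (Fin n)} {m m' : ℕ} (hm : m ≤ n) (hm' : m' ≤ n)
    (h : vtx σ m = vtx τ m') : m = m' := by
  rw [← card_filter_apply_lt σ hm, ← card_filter_apply_lt τ hm']
  congr 1
  ext x
  simpa using vtx_eq_vtx_iff.mp h x

lemma IsSwap.lt {σ : Equiv.Perm (Fin n)} {k : ℕ} (hk : IsSwap σ k) : k < n := by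
  obtain ⟨_, j, _, rfl, _⟩ := hk
  exact j.isLt

lemma vtx_eq_of_excl_subset_vert {σ τ : Equiv.Perm (Fin n)} (h : excl σ ⊆ vert τ) {k : ℕ}
    (hk : IsSwap σ k) : vtx σ k = vtx τ k := by
  have hkn := hk.lt
  obtain ⟨k', hk', hvtx⟩ :=
    mem_image.mp (h (mem_image_of_mem _ (mem_filter.mpr ⟨mem_range.mpr (by omega), hk⟩)))
  rw [← hvtx, eq_of_vtx_eq_vtx hkn.le (Nat.lt_succ_iff.mp (mem_range.mp hk')) hvtx.symm]

lemma swap_lt_swap_iff {i j : Fin n} (hij : (j : ℕ) = i + 1) {u v : Fin n} :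
    Equiv.swap i j u < Equiv.swap i j v ↔ (u = j ∧ v = i) ∨ (u < v ∧ ¬(u = i ∧ v = j)) := by
  simp only [Equiv.swap_apply_def, Fin.lt_def, Fin.ext_iff]
  split_ifs <;> omega

lemma SwapsTo.isAlternating {σ τ : Equiv.Perm (Fin n)} (hστ : SwapsTo σ τ)
    (hσ : IsAlternating σ) : IsAlternating τ := by
  obtain ⟨i, j, hij, hpos, rfl⟩ := hστ
  -- the values `i` and `j` are not adjacent in `σ`, so swapping them keeps every descent
  have hkeep : ∀ p q : Fin n, (q : ℕ) = p + 1 →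
      (Equiv.swap i j (σ p) < Equiv.swap i j (σ q) ↔ σ p < σ q) ∧
      (Equiv.swap i j (σ q) < Equiv.swap i j (σ p) ↔ σ q < σ p) := by
    intro p q hpq
    have hne : ∀ a b, σ p = a → σ q = b → ¬((a = i ∧ b = j) ∨ (a = j ∧ b = i)) := by
      rintro a b rfl rfl (⟨rfl, rfl⟩ | ⟨rfl, rfl⟩) <;> simp at hpos <;> omega
    rw [swap_lt_swap_iff hij, swap_lt_swap_iff hij]
    have := hne _ _ rfl rfl
    constructor <;> constructor <;> tauto
  intro p q hpq
  simp only [Equiv.Perm.mul_apply, (hkeep p q hpq).1, (hkeep p q hpq).2]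
  exact hσ p q hpq

lemma SwapsTo.invNum_eq {σ τ : Equiv.Perm (Fin n)} (hστ : SwapsTo σ τ) :
    invNum τ = invNum σ + 1 := by
  obtain ⟨i, j, hij, hpos, rfl⟩ := hστ
  have hnew : (σ.symm i, σ.symm j) ∉
      univ.filter fun p : Fin n × Fin n => p.1 < p.2 ∧ σ p.2 < σ p.1 := by
    simp only [mem_filter, mem_univ, true_and, Equiv.apply_symm_apply, not_and, Fin.lt_def]
    omega
  unfold invNum
  rw [← card_insert_of_notMem hnew]
  congr 1
  ext ⟨p, q⟩
  simp only [mem_filter, mem_univ, true_and, mem_insert, Prod.mk.injEq, Equiv.Perm.mul_apply,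
    swap_lt_swap_iff hij, Equiv.eq_symm_apply]
  constructor
  · rintro ⟨hpq, ⟨hq, hp⟩ | ⟨hlt, -⟩⟩
    · exact Or.inl ⟨hp, hq⟩
    · exact Or.inr ⟨hpq, hlt⟩
  · rintro (⟨hp, hq⟩ | ⟨hpq, hlt⟩)
    · rw [← Equiv.eq_symm_apply] at hp hq
      subst hp hq
      exact ⟨Fin.lt_def.mpr (by omega), Or.inl ⟨by simp, by simp⟩⟩
    · refine ⟨hpq, Or.inr ⟨hlt, fun ⟨hq, hp⟩ => ?_⟩⟩
      rw [← Equiv.eq_symm_apply] at hp hq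
      subst hp hq
      rw [Fin.lt_def] at hpq
      omega

lemma IsSwap.exists_swapsTo {σ : Equiv.Perm (Fin n)} {k : ℕ} (hk : IsSwap σ k) :
    ∃ τ, SwapsTo σ τ ∧ ∀ m ≠ k, vtx τ m = vtx σ m := by
  obtain ⟨i, j, hi, hj, hpos⟩ := hk
  refine ⟨Equiv.swap i j * σ, ⟨i, j, by omega, hpos, rfl⟩, fun m hm => ?_⟩
  ext x
  simp only [vtx, Equiv.Perm.mul_apply, Equiv.swap_apply_def]
  split_ifs <;> simp_all [Fin.ext_iff] <;> omega

lemma invNum_le_mul_self (σ : Equiv.Perm (Fin n)) : invNum σ ≤ n * n :=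
  (card_filter_le _ _).trans (by simp)

namespace IsAlternating

variable {σ : Equiv.Perm (Fin n)}

/-- `2 * (p / 2) + 1` is the least odd number `≥ p`. -/
lemma le_of_forall_not_isSwap (hσ : IsAlternating σ) {v : Fin n} {b : ℕ}
    (hns : ∀ m, (v : ℕ) < m → m < b → ¬IsSwap σ m) (x : Fin n) (hvx : v ≤ σ x)
    (hxb : (σ x : ℕ) < b) : (x : ℕ) ≤ 2 * ((σ.symm v : ℕ) / 2) + 1 := by
  obtain ⟨d, hd⟩ : ∃ d, (σ x : ℕ) = v + d := ⟨_, (Nat.add_sub_cancel' hvx).symm⟩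
  induction d generalizing x with
  | zero =>
    obtain rfl : x = σ.symm v := by rw [Equiv.eq_symm_apply]; ext; omega
    omega
  | succ d ih =>
    set y := σ.symm ⟨v + d, by omega⟩
    have hy : (σ y : ℕ) = v + d := by simp [y]
    have hyb := ih y (by rw [Fin.le_def]; omega) (by omega) hy
    have hxy : (x : ℕ) ≤ y + 1 := by
      by_contra hlt
      exact hns (σ x) (by omega) hxb ⟨σ y, σ x, by omega, rfl, by simpa using by omega⟩
    rcases hxy.lt_or_eq with hlt | hadj
    · omega
    · have hyeven : ¬Odd (y : ℕ) := fun hodd => by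
        have := (hσ y x hadj).2 hodd
        rw [Fin.lt_def] at this
        omega
      rw [Nat.not_odd_iff_even, Nat.even_iff] at hyeven
      omega

lemma symm_eq_of_vtx_eq (hσ : IsAlternating σ) {τ : Equiv.Perm (Fin n)} (hτ : IsAlternating τ)
    {v : Fin n} {b : ℕ} (hvb : (v : ℕ) < b)
    (hns : ∀ m, (v : ℕ) < m → m < b → ¬IsSwap σ m ∧ ¬IsSwap τ m)
    (hv : vtx σ v = vtx τ v) (hb : vtx σ b = vtx τ b) : σ.symm v = τ.symm v := by
  have hblock : ∀ x, (v ≤ σ x ∧ (σ x : ℕ) < b) ↔ (v ≤ τ x ∧ (τ x : ℕ) < b) := fun x => by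
    have h₁ := vtx_eq_vtx_iff.mp hv x
    have h₂ := vtx_eq_vtx_iff.mp hb x
    simp only [Fin.le_def]
    constructor <;> rintro ⟨_, _⟩ <;> constructor <;> omega
  set p := σ.symm v with hp
  set p' := τ.symm v with hp'
  have hσp : σ p = v := by simp [hp]
  have hτp' : τ p' = v := by simp [hp']
  have hpτ := (hblock p).1 ⟨hσp.ge, by omega⟩
  have hp'σ := (hblock p').2 ⟨hτp'.ge, by omega⟩
  have h₁ : (p' : ℕ) ≤ 2 * (p / 2) + 1 :=
    hσ.le_of_forall_not_isSwap (fun m h₁ h₂ => (hns m h₁ h₂).1) p' hp'σ.1 hp'σ.2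
  have h₂ : (p : ℕ) ≤ 2 * (p' / 2) + 1 :=
    hτ.le_of_forall_not_isSwap (fun m h₁ h₂ => (hns m h₁ h₂).2) p hpτ.1 hpτ.2
  ext
  by_contra hne
  rcases (by omega : (p' : ℕ) = p + 1 ∧ (p : ℕ) % 2 = 0 ∨ (p : ℕ) = p' + 1 ∧ (p' : ℕ) % 2 = 0)
    with ⟨hadj, heven⟩ | ⟨hadj, heven⟩
  · have hlt := (hτ p p' hadj).1 (Nat.even_iff.mpr heven)
    rw [hτp'] at hlt
    exact hpτ.1.not_gt hlt
  · have hlt := (hσ p' p hadj).1 (Nat.even_iff.mpr heven)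
    rw [hσp] at hlt
    exact hp'σ.1.not_gt hlt

theorem eq_of_vtx_eq (hσ : IsAlternating σ) {τ : Equiv.Perm (Fin n)} (hτ : IsAlternating τ)
    (H : ∀ c, IsSwap σ c ∨ IsSwap τ c → vtx σ c = vtx τ c) : σ = τ := by
  have hcut : ∀ k ≤ n, vtx σ k = vtx τ k := by
    intro k hk
    induction k with
    | zero => ext; simp [vtx]
    | succ k ih =>
      have hex : ∃ c, k < c ∧ c ≤ n ∧ vtx σ c = vtx τ c :=
        ⟨n, hk, le_rfl, by ext x; simp [vtx]⟩
      obtain ⟨hkb, -, hb⟩ := Nat.find_spec hex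
      have hns : ∀ m, k < m → m < Nat.find hex → ¬IsSwap σ m ∧ ¬IsSwap τ m :=
        fun m hkm hmb => ⟨fun hs => Nat.find_min hex hmb ⟨hkm, hs.lt.le, H m (Or.inl hs)⟩,
          fun hs => Nat.find_min hex hmb ⟨hkm, hs.lt.le, H m (Or.inr hs)⟩⟩
      have hsymm := hσ.symm_eq_of_vtx_eq hτ (v := ⟨k, hk⟩) hkb hns (ih (by omega)) hb
      have hk' : ∀ x, σ x = ⟨k, hk⟩ ↔ τ x = ⟨k, hk⟩ := fun x => by
        rw [← Equiv.eq_symm_apply, hsymm, Equiv.eq_symm_apply]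
      rw [vtx_eq_vtx_iff] at ih ⊢
      intro x
      have := ih (by omega) x
      have := hk' x
      simp only [Fin.ext_iff] at this
      omega
  ext x
  have h₁ := vtx_eq_vtx_iff.mp (hcut (σ x) (σ x).isLt.le) x
  have h₂ := vtx_eq_vtx_iff.mp (hcut (τ x) (τ x).isLt.le) x
  omega

theorem invNum_le_of_vtx_eq (hσ : IsAlternating σ) {τ : Equiv.Perm (Fin n)} (hτ : IsAlternating τ)
    (H : ∀ c, IsSwap σ c → vtx σ c = vtx τ c) : invNum τ ≤ invNum σ := by
  by_cases hk : ∃ k, IsSwap τ k ∧ ¬IsSwap σ k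
  · obtain ⟨k, hkτ, hkσ⟩ := hk
    obtain ⟨τ', hττ', hvtx⟩ := hkτ.exists_swapsTo
    have hinv := hττ'.invNum_eq
    have hbound := invNum_le_mul_self τ'
    have := hσ.invNum_le_of_vtx_eq (hττ'.isAlternating hτ) fun c hc =>
      (H c hc).trans (hvtx c fun hck => hkσ (hck ▸ hc)).symm
    omega
  · push Not at hk
    rw [hσ.eq_of_vtx_eq hτ fun c hc => hc.elim (H c) fun hcτ => H c (hk c hcτ)]
termination_by n * n - invNum τ

end IsAlternating

end

/-- an alternating permutation maximizes inversion number over all alternating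
permutations whose vertex set contains its exclusion set. -/
theorem invNum_le_of_excl_subset_vert (n : ℕ) (σ τ : Equiv.Perm (Fin n))
    (hσ : IsAlternating σ) (hτ : IsAlternating τ) (h : excl σ ⊆ vert τ) :
    invNum τ ≤ invNum σ :=
  hσ.invNum_le_of_vtx_eq hτ fun _ hc => vtx_eq_of_excl_subset_vert h hc
end

section
/- The number of alternating permutations of length n whose swap set is contained in a given set S = {s_1 < … < s_k} ⊆ [n-1] equals the number of chains of order ideals I_1 ⊊ … ⊊ I_k in the zig-zag poset Z_n with |I_j| = s_j for all j. -/
open Finset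

lemma card_fin_lt {N : ℕ} (m : ℕ) (h : m ≤ N) :
    (Finset.univ.filter fun v : Fin N => (v : ℕ) < m).card = m := by
  have : (Finset.univ.filter fun v : Fin N => (v : ℕ) < m).card = (Finset.range m).card := by
    refine Finset.card_bij (fun v _ => (v : ℕ)) ?_ ?_ ?_
    · intro a ha; simp only [mem_filter] at ha; simpa using ha.2
    · intro a ha b hb hab; exact Fin.ext hab
    · intro b hb
      simp only [Finset.mem_range] at hb
      exact ⟨⟨b, lt_of_lt_of_le hb h⟩, by simp [hb], rfl⟩
  simpa using this

lemma lex_lt {B a a' r r' : ℕ} (hr : r < B) (hr' : r' < B) :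
    a * B + r < a' * B + r' ↔ a < a' ∨ (a = a' ∧ r < r') := by
  constructor
  · intro h
    rcases lt_trichotomy a a' with h1 | h1 | h1
    · exact Or.inl h1
    · subst h1; exact Or.inr ⟨rfl, by omega⟩
    · exfalso
      have : a' * B + B ≤ a * B := by
        calc a' * B + B = (a' + 1) * B := by ring
        _ ≤ a * B := Nat.mul_le_mul_right B h1
      omega
  · rintro (h1 | ⟨h1, h2⟩)
    · have : a * B + B ≤ a' * B := by
        calc a * B + B = (a + 1) * B := by ring
        _ ≤ a' * B := Nat.mul_le_mul_right B h1
      omega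
    · subst h1; omega

/-- level set of a permutation -/
def lvl {n : ℕ} (σ : Equiv.Perm (Fin n)) (m : ℕ) : Finset (Fin n) :=
  Finset.univ.filter (fun p => (σ p : ℕ) < m)

lemma lvl_card {n : ℕ} (σ : Equiv.Perm (Fin n)) (m : ℕ) (h : m ≤ n) :
    (lvl σ m).card = m := by
  have : lvl σ m = (Finset.univ.filter fun v : Fin n => (v : ℕ) < m).map σ.symm.toEmbedding := by
    ext p
    simp only [lvl, mem_filter, mem_univ, true_and, Finset.mem_map,
      Equiv.coe_toEmbedding]
    constructor
    · intro hp; exact ⟨σ p, hp, σ.symm_apply_apply p⟩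
    · rintro ⟨v, hv, rfl⟩; simpa using hv
  rw [this, Finset.card_map, card_fin_lt m h]

lemma lvl_ideal {n : ℕ} {σ : Equiv.Perm (Fin n)} (hσ : IsAlternating σ) (m : ℕ) :
    IsOrderIdeal (lvl σ m) := by
  intro i j hij hj
  simp only [lvl, mem_filter, mem_univ, true_and] at hj ⊢
  rcases hij with rfl | ⟨hodd, hij | hij⟩
  · exact hj
  · -- i + 1 = j, j odd, so i even
    have heven : Even (i : ℕ) := by
      rcases Nat.even_or_odd (i : ℕ) with h | h
      · exact h
      · exfalso; rcases hodd with ⟨a, ha⟩; rcases h with ⟨b, hb⟩; omega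
    have := (hσ i j hij.symm).1 heven
    exact lt_trans (by exact_mod_cast this) hj
  · -- i = j + 1, j odd
    have := (hσ j i hij).2 hodd
    exact lt_trans (by exact_mod_cast this) hj


/-- inner key: sorts by column `p/2` descending then `p` ascending -/
def inkey {n : ℕ} (p : Fin n) : ℕ := (n - (p : ℕ) / 2) * n + (p : ℕ)

lemma inkey_lt_bound {n : ℕ} (p : Fin n) : inkey p < n * (n + 1) := by
  have h1 : (n - (p : ℕ) / 2) * n ≤ n * n := Nat.mul_le_mul_right n (Nat.sub_le _ _)
  have h2 : (p : ℕ) < n := p.isLt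
  calc inkey p = (n - (p : ℕ) / 2) * n + (p : ℕ) := rfl
  _ < n * n + n := by omega
  _ = n * (n + 1) := by ring

lemma inkey_lt_iff {n : ℕ} (p q : Fin n) :
    inkey p < inkey q ↔ ((q : ℕ) / 2 < (p : ℕ) / 2 ∨ ((p : ℕ) / 2 = (q : ℕ) / 2 ∧ (p : ℕ) < (q : ℕ))) := by
  have hp : (p : ℕ) < n := p.isLt
  have hq : (q : ℕ) < n := q.isLt
  have hp2 : (p : ℕ) / 2 ≤ (p : ℕ) := Nat.div_le_self _ _
  have hq2 : (q : ℕ) / 2 ≤ (q : ℕ) := Nat.div_le_self _ _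
  rw [inkey, inkey, lex_lt hp hq]
  omega

/-- block index: number of chain members not containing p -/
def tval {n k : ℕ} (I : Fin k → Finset (Fin n)) (p : Fin n) : ℕ :=
  (Finset.univ.filter fun j => p ∉ I j).card

lemma tval_le_card {n k : ℕ} (I : Fin k → Finset (Fin n)) (p : Fin n) : tval I p ≤ k := by
  classical
  calc tval I p ≤ Finset.univ.card := Finset.card_filter_le _ _
  _ = k := by simp

/-- the global key -/
def key {n k : ℕ} (I : Fin k → Finset (Fin n)) (p : Fin n) : ℕ :=
  tval I p * (n * (n + 1)) + inkey p

lemma key_lt_iff {n k : ℕ} (I : Fin k → Finset (Fin n)) (p q : Fin n) :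
    key I p < key I q ↔ tval I p < tval I q ∨ (tval I p = tval I q ∧ inkey p < inkey q) :=
  lex_lt (inkey_lt_bound p) (inkey_lt_bound q)

lemma key_inj {n k : ℕ} (I : Fin k → Finset (Fin n)) {p q : Fin n}
    (h : key I p = key I q) : p = q := by
  by_contra hne
  rcases lt_trichotomy (key I p) (key I q) with h1 | h1 | h1
  · omega
  · rcases lt_trichotomy (tval I p) (tval I q) with h2 | h2 | h2
    · have := (key_lt_iff I p q).mpr (Or.inl h2); omega
    · have h3 : inkey p ≠ inkey q := by
        intro he
        have hp : (p : ℕ) = (q : ℕ) := by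
          have h4 := inkey_lt_iff p q
          have h5 := inkey_lt_iff q p
          omega
        exact hne (Fin.ext hp)
      rcases Nat.lt_or_ge (inkey p) (inkey q) with h4 | h4
      · have := (key_lt_iff I p q).mpr (Or.inr ⟨h2, h4⟩); omega
      · have := (key_lt_iff I q p).mpr (Or.inr ⟨h2.symm, by omega⟩); omega
    · have := (key_lt_iff I q p).mpr (Or.inl h2); omega
  · omega

/-- the rank of p under the key order -/
def rk {n k : ℕ} (I : Fin k → Finset (Fin n)) (p : Fin n) : ℕ :=
  (Finset.univ.filter fun q => key I q < key I p).card

lemma rk_lt {n k : ℕ} (I : Fin k → Finset (Fin n)) (p : Fin n) : rk I p < n := by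
  unfold rk
  have hsub : (Finset.univ.filter fun q => key I q < key I p) ⊆ Finset.univ.erase p := by
    intro q hq
    simp only [mem_filter, mem_univ, true_and] at hq
    refine Finset.mem_erase.mpr ⟨?_, Finset.mem_univ q⟩
    intro h; subst h; omega
  have := Finset.card_le_card hsub
  have h2 : (Finset.univ.erase p).card = n - 1 := by
    rw [Finset.card_erase_of_mem (Finset.mem_univ p)]; simp
  have : 0 < n := p.pos
  omega

lemma rk_strict {n k : ℕ} (I : Fin k → Finset (Fin n)) {p q : Fin n}
    (h : key I p < key I q) : rk I p < rk I q := by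
  apply Finset.card_lt_card
  constructor
  · intro r hr
    simp only [mem_filter, mem_univ, true_and] at hr ⊢
    omega
  · intro hsub
    have hp : p ∈ Finset.univ.filter fun r => key I r < key I q := by
      simp only [mem_filter, mem_univ, true_and]; exact h
    have := hsub hp
    simp only [mem_filter, mem_univ, true_and] at this
    omega

lemma rk_inj {n k : ℕ} (I : Fin k → Finset (Fin n)) : Function.Injective
    (fun p : Fin n => (⟨rk I p, rk_lt I p⟩ : Fin n)) := by
  intro p q h
  simp only [Fin.mk.injEq] at h
  by_contra hne
  have hk : key I p ≠ key I q := fun he => hne (key_inj I he)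
  rcases Nat.lt_or_ge (key I p) (key I q) with h1 | h1
  · have := rk_strict I h1; omega
  · have := rk_strict I (show key I q < key I p by omega); omega

/-- the permutation built from a chain of ideals -/
noncomputable def permOf {n k : ℕ} (I : Fin k → Finset (Fin n)) : Equiv.Perm (Fin n) :=
  Equiv.ofBijective _ ((Finite.injective_iff_bijective).mp (rk_inj I))

lemma permOf_apply {n k : ℕ} (I : Fin k → Finset (Fin n)) (p : Fin n) :
    (permOf I p : ℕ) = rk I p := rfl

lemma permOf_lt_iff {n k : ℕ} (I : Fin k → Finset (Fin n)) (p q : Fin n) :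
    rk I p < rk I q ↔ key I p < key I q := by
  constructor
  · intro h
    rcases lt_trichotomy (key I p) (key I q) with h1 | h1 | h1
    · exact h1
    · have := key_inj I h1; subst this; omega
    · have := rk_strict I h1; omega
  · exact rk_strict I


section
variable {n k : ℕ} {I : Fin k → Finset (Fin n)}
  (hI2 : ∀ j j' : Fin k, j < j' → I j ⊂ I j')

include hI2

lemma mem_mono {p : Fin n} {j j' : Fin k} (h : j ≤ j') (hp : p ∈ I j) : p ∈ I j' := by
  rcases eq_or_lt_of_le h with rfl | h
  · exact hp
  · exact (hI2 j j' h).1 hp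

lemma tval_le_of_mem {p : Fin n} {j : Fin k} (hp : p ∈ I j) : tval I p ≤ (j : ℕ) := by
  have hsub : (Finset.univ.filter fun j' => p ∉ I j') ⊆
      (Finset.univ.filter fun v : Fin k => (v : ℕ) < (j : ℕ)) := by
    intro j' hj'
    simp only [mem_filter, mem_univ, true_and] at hj' ⊢
    by_contra h
    exact hj' (mem_mono hI2 (by exact Fin.le_def.mpr (by omega)) hp)
  have := Finset.card_le_card hsub
  rwa [card_fin_lt (j : ℕ) (le_of_lt j.isLt)] at this

lemma lt_tval_of_not_mem {p : Fin n} {j : Fin k} (hp : p ∉ I j) : (j : ℕ) < tval I p := by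
  have hsub : (Finset.univ.filter fun v : Fin k => (v : ℕ) < (j : ℕ) + 1) ⊆
      (Finset.univ.filter fun j' => p ∉ I j') := by
    intro j' hj'
    simp only [mem_filter, mem_univ, true_and] at hj' ⊢
    intro hmem
    exact hp (mem_mono hI2 (Fin.le_def.mpr (by omega)) hmem)
  have := Finset.card_le_card hsub
  rwa [card_fin_lt ((j : ℕ) + 1) j.isLt] at this

lemma tval_le_iff {p : Fin n} {j : Fin k} : tval I p ≤ (j : ℕ) ↔ p ∈ I j := by
  constructor
  · intro h
    by_contra hp
    have := lt_tval_of_not_mem hI2 hp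
    omega
  · exact tval_le_of_mem hI2

lemma filter_tval_le (j : Fin k) :
    (Finset.univ.filter fun r : Fin n => tval I r ≤ (j : ℕ)) = I j := by
  ext r
  simp only [mem_filter, mem_univ, true_and]
  exact tval_le_iff hI2

end


section
variable {n k : ℕ} {I : Fin k → Finset (Fin n)} {s : Fin k → ℕ}
  (hI1 : ∀ j, IsOrderIdeal (I j))
  (hI2 : ∀ j j' : Fin k, j < j' → I j ⊂ I j')
  (hI3 : ∀ j, (I j).card = s j)

include hI1 in
lemma tval_mono_zigzag {p q : Fin n} (h : zigzagLE p q) :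
    tval I p ≤ tval I q := by
  apply Finset.card_le_card
  intro j hj
  simp only [mem_filter, mem_univ, true_and] at hj ⊢
  intro hq
  exact hj (hI1 j p q h hq)

include hI1 in
lemma permOf_alternating : IsAlternating (permOf I) := by
  intro i j hij
  constructor
  · intro heven
    have hle : zigzagLE i j := by
      right
      constructor
      · rw [hij]; rcases heven with ⟨a, ha⟩; exact ⟨a, by omega⟩
      · left; omega
    have ht : tval I i ≤ tval I j := tval_mono_zigzag hI1 hle
    have hkey : key I i < key I j := by
      rw [key_lt_iff]
      rcases eq_or_lt_of_le ht with he | hlt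
      · right
        refine ⟨he, ?_⟩
        rw [inkey_lt_iff]
        right
        constructor
        · rcases heven with ⟨a, ha⟩; omega
        · omega
      · exact Or.inl hlt
    have := (permOf_lt_iff I i j).mpr hkey
    rw [Fin.lt_def, permOf_apply, permOf_apply]
    exact this
  · intro hodd
    have hle : zigzagLE j i := by
      right
      exact ⟨hodd, Or.inr hij⟩
    have ht : tval I j ≤ tval I i := tval_mono_zigzag hI1 hle
    have hkey : key I j < key I i := by
      rw [key_lt_iff]
      rcases eq_or_lt_of_le ht with he | hlt
      · right
        refine ⟨he, ?_⟩
        rw [inkey_lt_iff]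
        left
        rcases hodd with ⟨a, ha⟩
        omega
      · exact Or.inl hlt
    have := (permOf_lt_iff I j i).mpr hkey
    rw [Fin.lt_def, permOf_apply, permOf_apply]
    exact this

include hI2 hI3 in
lemma permOf_swap_sub {m : ℕ} (hm : m ∈ swapSet (permOf I)) : ∃ j : Fin k, s j = m := by
  rw [swapSet, mem_filter, Finset.mem_range] at hm
  obtain ⟨hmn, hsw⟩ := hm
  obtain ⟨a, b, ha, hb, hab⟩ := hsw
  set p := (permOf I).symm a with hp
  set q := (permOf I).symm b with hq
  have hrp : rk I p = (a : ℕ) := by rw [← permOf_apply]; congr 1; exact Equiv.apply_symm_apply _ _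
  have hrq : rk I q = (b : ℕ) := by rw [← permOf_apply]; congr 1; exact Equiv.apply_symm_apply _ _
  have hkey : key I p < key I q := by
    rw [← permOf_lt_iff]; omega
  -- rule out same block
  have htlt : tval I p < tval I q := by
    rcases (key_lt_iff I p q).mp hkey with h | ⟨he, hin⟩
    · exact h
    · exfalso
      rcases (inkey_lt_iff p q).mp hin with h1 | ⟨h1, h2⟩
      · -- q's column < p's column, so q < p, contradicting p + 1 < q
        have hp2 := Nat.div_add_mod (p : ℕ) 2
        have hq2 := Nat.div_add_mod (q : ℕ) 2
        have := Nat.mod_lt (p : ℕ) (show 0 < 2 by norm_num)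
        have := Nat.mod_lt (q : ℕ) (show 0 < 2 by norm_num)
        omega
      · -- same column, p < q means q = p + 1, contradicting p + 1 < q
        have hp2 := Nat.div_add_mod (p : ℕ) 2
        have hq2 := Nat.div_add_mod (q : ℕ) 2
        have := Nat.mod_lt (p : ℕ) (show 0 < 2 by norm_num)
        have := Nat.mod_lt (q : ℕ) (show 0 < 2 by norm_num)
        omega
  have htq : tval I q ≤ k := tval_le_card I q
  have htq1 : 1 ≤ tval I q := by omega
  set j₀ : Fin k := ⟨tval I q - 1, by omega⟩ with hj₀
  refine ⟨j₀, ?_⟩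
  have hset : (Finset.univ.filter fun r => key I r < key I q) = I j₀ := by
    rw [← filter_tval_le hI2 j₀]
    ext r
    simp only [mem_filter, mem_univ, true_and]
    constructor
    · intro hr
      rcases (key_lt_iff I r q).mp hr with h | ⟨he, hin⟩
      · show (tval I r) ≤ (j₀ : ℕ); simp only [hj₀]; omega
      · exfalso
        have h1 : key I p < key I r := by
          rw [key_lt_iff]; left; omega
        have h2 := (permOf_lt_iff I p r).mpr h1
        have h3 := (permOf_lt_iff I r q).mpr ((key_lt_iff I r q).mpr (Or.inr ⟨he, hin⟩))
        omega
    · intro hr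
      rw [key_lt_iff]
      left
      have : (j₀ : ℕ) = tval I q - 1 := rfl
      omega
  have : rk I q = (I j₀).card := by rw [rk, hset]
  rw [hI3 j₀] at this
  omega

include hI2 hI3 in
lemma permOf_lvl (h1 : ∀ j, 1 ≤ s j) (h2 : ∀ j, s j ≤ n - 1) (j : Fin k) :
    lvl (permOf I) (s j) = I j := by
  have hsn : s j ≤ n := by
    have := h1 j; have := h2 j
    omega
  have hcard : (lvl (permOf I) (s j)).card = s j := lvl_card _ _ hsn
  have hsub : I j ⊆ lvl (permOf I) (s j) := by
    intro p hp
    simp only [lvl, mem_filter, mem_univ, true_and]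
    rw [permOf_apply]
    have hss : (Finset.univ.filter fun r => key I r < key I p) ⊆ (I j).erase p := by
      intro r hr
      simp only [mem_filter, mem_univ, true_and] at hr
      refine Finset.mem_erase.mpr ⟨?_, ?_⟩
      · intro h; subst h; omega
      · rcases (key_lt_iff I r p).mp hr with h | ⟨he, _⟩
        · have : tval I r ≤ (j : ℕ) := le_trans (le_of_lt h) (tval_le_of_mem hI2 hp)
          exact (tval_le_iff hI2).mp this
        · have : tval I r ≤ (j : ℕ) := he ▸ (tval_le_of_mem hI2 hp)
          exact (tval_le_iff hI2).mp this
    have := Finset.card_le_card hss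
    have h3 : ((I j).erase p).card = (I j).card - 1 := Finset.card_erase_of_mem hp
    have h4 : 1 ≤ (I j).card := Finset.card_pos.mpr ⟨p, hp⟩
    rw [rk]
    have := hI3 j
    omega
  symm
  apply Finset.eq_of_subset_of_card_le hsub
  rw [hcard, hI3 j]

end


section
variable {n k : ℕ} {s : Fin k → ℕ} {σ : Equiv.Perm (Fin n)}

/-- the count of boundaries at or below value v -/
def tvn (s : Fin k → ℕ) (v : ℕ) : ℕ := (Finset.univ.filter fun j : Fin k => s j ≤ v).card

lemma tvn_mono {v w : ℕ} (h : v ≤ w) : tvn s v ≤ tvn s w := by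
  apply Finset.card_le_card
  intro j hj
  simp only [mem_filter, mem_univ, true_and] at hj ⊢
  omega

lemma mem_lvl {m : ℕ} {p : Fin n} : p ∈ lvl σ m ↔ (σ p : ℕ) < m := by
  simp [lvl]

lemma tval_lvl_eq (p : Fin n) : tval (fun j => lvl σ (s j)) p = tvn s ((σ p : ℕ)) := by
  unfold tval tvn
  congr 1
  ext j
  simp only [mem_filter, mem_univ, true_and]
  rw [mem_lvl]
  omega

variable (hσ : IsAlternating σ) (hsw : ∀ m ∈ swapSet σ, ∃ j : Fin k, s j = m)

include hσ hsw in
lemma inkey_step {a b : Fin n} (hab : (b : ℕ) = (a : ℕ) + 1)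
    (ht : tvn s ((a : ℕ)) = tvn s ((b : ℕ))) :
    inkey (σ.symm a) < inkey (σ.symm b) := by
  -- no boundary at a+1
  have hnb : ¬ ∃ j : Fin k, s j = (b : ℕ) := by
    rintro ⟨j, hj⟩
    have hsub : (Finset.univ.filter fun j : Fin k => s j ≤ (a : ℕ)) ⊆
        (Finset.univ.filter fun j : Fin k => s j ≤ (b : ℕ)) := by
      intro x hx; simp only [mem_filter, mem_univ, true_and] at hx ⊢; omega
    have heq := Finset.eq_of_subset_of_card_le hsub (le_of_eq ht.symm)
    have hj1 : j ∈ (Finset.univ.filter fun j : Fin k => s j ≤ (b : ℕ)) := by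
      simp only [mem_filter, mem_univ, true_and]; omega
    rw [← heq] at hj1
    simp only [mem_filter, mem_univ, true_and] at hj1
    omega
  -- b is not a swap value
  have hns : ¬ IsSwap σ ((b : ℕ)) := by
    intro h
    exact hnb (hsw (b : ℕ) (by rw [swapSet, mem_filter, Finset.mem_range]; exact ⟨b.isLt, h⟩))
  set p := σ.symm a with hpdef
  set q := σ.symm b with hqdef
  have hσp : (σ p : ℕ) = (a : ℕ) := by rw [hpdef, Equiv.apply_symm_apply]
  have hσq : (σ q : ℕ) = (b : ℕ) := by rw [hqdef, Equiv.apply_symm_apply]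
  have hpq : p ≠ q := by intro h; rw [h] at hσp; omega
  have hle : (q : ℕ) ≤ (p : ℕ) + 1 := by
    by_contra h
    push_neg at h
    exact hns ⟨a, b, by omega, rfl, by rw [← hpdef, ← hqdef]; omega⟩
  have hne : (q : ℕ) ≠ (p : ℕ) := fun h => hpq ((Fin.ext h).symm ▸ rfl)
  rw [inkey_lt_iff]
  rcases Nat.lt_or_ge (q : ℕ) (p : ℕ) with hlt | hge
  · -- q < p
    rcases lt_trichotomy ((q : ℕ) / 2) ((p : ℕ) / 2) with h1 | h1 | h1
    · exact Or.inl h1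
    · -- same column: q even, p = q + 1
      exfalso
      have hq2 : (q : ℕ) % 2 = 0 := by omega
      have hp2 : (p : ℕ) = (q : ℕ) + 1 := by omega
      have := (hσ q p (by omega)).1 (Nat.even_iff.mpr hq2)
      rw [Fin.lt_def] at this
      omega
    · omega
  · -- q = p + 1
    have hq1 : (q : ℕ) = (p : ℕ) + 1 := by omega
    have hpe : Even (p : ℕ) := by
      rcases Nat.even_or_odd (p : ℕ) with h2 | h2
      · exact h2
      · exfalso
        have := (hσ p q (by omega)).2 h2
        rw [Fin.lt_def] at this
        omega
    have hp2 : (p : ℕ) % 2 = 0 := Nat.even_iff.mp hpe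
    right
    exact ⟨by omega, by omega⟩

include hσ hsw in
lemma inkey_chain (d : ℕ) : ∀ a b : Fin n, (b : ℕ) = (a : ℕ) + d + 1 →
    tvn s ((a : ℕ)) = tvn s ((b : ℕ)) → inkey (σ.symm a) < inkey (σ.symm b) := by
  induction d with
  | zero => intro a b hab ht; exact inkey_step hσ hsw (by omega) ht
  | succ d ih =>
    intro a b hab ht
    set u : Fin n := ⟨(a : ℕ) + d + 1, by have := b.isLt; omega⟩ with hu
    have hua : (u : ℕ) = (a : ℕ) + d + 1 := rfl
    have h1 : tvn s ((a : ℕ)) ≤ tvn s ((u : ℕ)) := tvn_mono (by omega)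
    have h2 : tvn s ((u : ℕ)) ≤ tvn s ((b : ℕ)) := tvn_mono (by omega)
    have step1 := ih a u hua (by omega)
    have step2 := inkey_step hσ hsw (show (b : ℕ) = (u : ℕ) + 1 by omega) (by omega)
    omega

include hσ hsw in
lemma key_lt_of_val_lt {p q : Fin n} (h : (σ p : ℕ) < (σ q : ℕ)) :
    key (fun j => lvl σ (s j)) p < key (fun j => lvl σ (s j)) q := by
  rw [key_lt_iff, tval_lvl_eq, tval_lvl_eq]
  have hmono : tvn s ((σ p : ℕ)) ≤ tvn s ((σ q : ℕ)) := tvn_mono (le_of_lt h)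
  rcases eq_or_lt_of_le hmono with he | hlt
  · right
    refine ⟨he, ?_⟩
    have hchain := inkey_chain hσ hsw ((σ q : ℕ) - (σ p : ℕ) - 1) (σ p) (σ q) (by omega) he
    rw [Equiv.symm_apply_apply, Equiv.symm_apply_apply] at hchain
    exact hchain
  · exact Or.inl hlt

include hσ hsw in
lemma rk_lvl_eq (p : Fin n) : rk (fun j => lvl σ (s j)) p = (σ p : ℕ) := by
  have hfe : (Finset.univ.filter fun q => key (fun j => lvl σ (s j)) q <
      key (fun j => lvl σ (s j)) p) = lvl σ ((σ p : ℕ)) := by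
    ext r
    simp only [mem_filter, mem_univ, true_and]
    rw [mem_lvl]
    constructor
    · intro h
      rcases lt_trichotomy ((σ r : ℕ)) ((σ p : ℕ)) with h1 | h1 | h1
      · exact h1
      · exfalso
        have : r = p := σ.injective (Fin.ext h1)
        subst this; omega
      · exfalso
        have := key_lt_of_val_lt hσ hsw h1
        omega
    · intro h
      exact key_lt_of_val_lt hσ hsw h
  rw [rk, hfe, lvl_card σ _ (le_of_lt (σ p).isLt)]

include hσ hsw in
lemma permOf_lvl_eq : permOf (fun j => lvl σ (s j)) = σ := by
  apply Equiv.ext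
  intro p
  apply Fin.ext
  rw [permOf_apply, rk_lvl_eq hσ hsw]

end


/-- the number of alternating permutations whose swap set is contained in
`S = {s_1 < … < s_k} ⊆ [n-1]` equals the number of chains of order ideals
`I_1 ⊊ … ⊊ I_k` of `Z_n` with `|I_j| = s_j`. -/
theorem card_swapSet_subset_eq_card_chains (n k : ℕ) (s : Fin k → ℕ)
    (hs : StrictMono s) (h1 : ∀ j, 1 ≤ s j) (h2 : ∀ j, s j ≤ n - 1) :
    Nat.card {σ : Equiv.Perm (Fin n) //
        IsAlternating σ ∧ ∀ m ∈ swapSet σ, ∃ j : Fin k, s j = m} =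
    Nat.card {I : Fin k → Finset (Fin n) //
        (∀ j, IsOrderIdeal (I j)) ∧ (∀ j j' : Fin k, j < j' → I j ⊂ I j') ∧
        ∀ j, (I j).card = s j} := by
  refine Nat.card_congr ?_
  refine
    { toFun := fun x => ⟨fun j => lvl x.1 (s j), ?_, ?_, ?_⟩
      invFun := fun y => ⟨permOf y.1, permOf_alternating y.2.1, fun m hm => permOf_swap_sub y.2.2.1 y.2.2.2 hm⟩
      left_inv := ?_
      right_inv := ?_ }
  · exact fun j => lvl_ideal x.2.1 (s j)
  · intro j j' hjj'
    refine Finset.ssubset_iff_subset_ne.mpr ⟨?_, ?_⟩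
    · intro p hp
      rw [mem_lvl] at hp ⊢
      exact lt_trans hp (hs hjj')
    · intro hcontra
      have hc2 : lvl (x.1) (s j) = lvl (x.1) (s j') := hcontra
      have e1 : (lvl x.1 (s j)).card = s j := lvl_card _ _ (by have := h1 j; have := h2 j; omega)
      have e2 : (lvl x.1 (s j')).card = s j' := lvl_card _ _ (by have := h1 j'; have := h2 j'; omega)
      rw [hc2, e2] at e1
      exact absurd e1 (ne_of_gt (hs hjj'))
  · exact fun j => lvl_card _ _ (by have := h1 j; have := h2 j; omega)
  · intro x
    exact Subtype.ext (permOf_lvl_eq x.2.1 x.2.2)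
  · intro y
    refine Subtype.ext (funext fun j => ?_)
    exact permOf_lvl y.2.2.1 y.2.2.2 h1 h2 j
end
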